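/- arXiv:2604.20815 — 6 statements merged into one kernel-verified Lean document; each statement's English description precedes it below -/
import Mathlib

section
/- Let d ≥ 1, r ≥ 2, t ≥ 2 be integers, let F be any r-direction-vector in ℝ^d, and let n ≥ t be an integer. Then there exists an F-family (B_1, …, B_r) with |B_j| = n for all j whose intersection hypergraph H is K_{t,…,t}^{(r)}-free and has at least (t-1) · n^{r-1} hyperedges. -/
open Set

/-- The axis-parallel box in `ℝ^d` with corner functions `lo` and `hi`. -/
def boxSet {d : ℕ} (lo hi : Fin d → ℝ) : Set (Fin d → ℝ) :=
  {x | ∀ i, x i ∈ Set.Icc (lo i) (hi i)}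

/-- `S` is an axis-parallel box in `ℝ^d` with direction set `F`
(degenerate coordinates allowed). -/
def IsBoxDir {d : ℕ} (S : Set (Fin d → ℝ)) (F : Set (Fin d)) : Prop :=
  ∃ lo hi : Fin d → ℝ, (∀ i, lo i ≤ hi i) ∧ S = boxSet lo hi ∧ F = {i | lo i < hi i}

/-- `S` is an axis-parallel box in `ℝ^d` (with some direction set). -/
def IsBox {d : ℕ} (S : Set (Fin d → ℝ)) : Prop :=
  ∃ lo hi : Fin d → ℝ, (∀ i, lo i ≤ hi i) ∧ S = boxSet lo hi

/-- The number of hyperedges of the `r`-partite `r`-uniform intersection hypergraph of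
the indexed families `B j : Fin (n j) → Set α`. -/
noncomputable def hyperedgeCount {α : Type} {r : ℕ} (n : Fin r → ℕ)
    (B : ∀ j : Fin r, Fin (n j) → Set α) : ℕ :=
  Nat.card {f : ∀ j : Fin r, Fin (n j) // (⋂ j, B j (f j)).Nonempty}

/-- The intersection hypergraph of the families `B j` is `K_{t,…,t}`-free:
there are no `t`-element subfamilies `S j ⊆ B j` all of whose transversal tuples
have a common point. -/
def KFree {α : Type} {r : ℕ} (t : ℕ) (n : Fin r → ℕ)
    (B : ∀ j : Fin r, Fin (n j) → Set α) : Prop :=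
  ¬ ∃ S : ∀ j : Fin r, Finset (Fin (n j)),
      (∀ j, (S j).card = t) ∧
      ∀ f : ∀ j : Fin r, Fin (n j), (∀ j, f j ∈ S j) → (⋂ j, B j (f j)).Nonempty

/-- `g_t(n_1, …, n_r) = t · n_1 ⋯ n_r · (1/n_1 + ⋯ + 1/n_r)`. -/
noncomputable def gZ {r : ℕ} (t : ℕ) (n : Fin r → ℕ) : ℝ :=
  (t : ℝ) * (∏ j, (n j : ℝ)) * (∑ j, 1 / (n j : ℝ))

/-- `F` is a 2-coherent direction-vector: for some `k`, the common directions of all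
families other than `k` number at least two. -/
def TwoCoherent {d r : ℕ} (F : Fin r → Set (Fin d)) : Prop :=
  ∃ k : Fin r, 2 ≤ Set.ncard {i : Fin d | ∀ j : Fin r, j ≠ k → i ∈ F j}

/-- the trivial lower bound `(t-1) · n^{r-1}` for every direction-vector. -/
theorem stmt2 (d r t : ℕ) (hd : 1 ≤ d) (hr : 2 ≤ r) (ht : 2 ≤ t)
    (F : Fin r → Set (Fin d)) (n : ℕ) (hn : t ≤ n) :
    ∃ B : Fin r → Fin n → Set (Fin d → ℝ),
      (∀ j k, IsBoxDir (B j k) (F j)) ∧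
      KFree t (fun _ => n) B ∧
      (t - 1) * n ^ (r - 1) ≤ hyperedgeCount (fun _ => n) B := by
  classical
  obtain ⟨r', rfl⟩ : ∃ r', r = r' + 1 := ⟨r - 1, by omega⟩
  set i0 : Fin d := ⟨0, hd⟩ with hi0
  set z0 : Fin (r' + 1) := ⟨0, by omega⟩ with hz0
  set z1 : Fin (r' + 1) := ⟨1, by omega⟩ with hz1
  set lo : Fin (r' + 1) → Fin n → Fin d → ℝ :=
    fun j k i => if j = z0 ∧ t - 1 ≤ (k : ℕ) ∧ i = i0 then 2 else 0 with hlo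
  set hi : Fin (r' + 1) → Fin n → Fin d → ℝ :=
    fun j k i => lo j k i + (if i ∈ F j then 1 else 0) with hhi
  have hle : ∀ j k i, lo j k i ≤ hi j k i := by
    intro j k i
    simp only [hhi, le_add_iff_nonneg_right]
    split <;> norm_num
  set B : Fin (r' + 1) → Fin n → Set (Fin d → ℝ) := fun j k => boxSet (lo j k) (hi j k) with hB
  have key : ∀ f : ∀ j : Fin (r' + 1), Fin n,
      (⋂ j, B j (f j)).Nonempty ↔ (f z0 : ℕ) < t - 1 := by
    intro f
    constructor
    · rintro ⟨x, hx⟩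
      simp only [Set.mem_iInter] at hx
      by_contra hlt
      push_neg at hlt
      have h0 := (hx z0) i0
      have h1 := (hx z1) i0
      have hz01 : z1 ≠ z0 := by
        simp [hz0, hz1, Fin.ext_iff]
      have e0 : lo z0 (f z0) i0 = 2 := by
        have hc : z0 = z0 ∧ t - 1 ≤ ((f z0 : Fin n) : ℕ) ∧ i0 = i0 := ⟨rfl, hlt, rfl⟩
        show (if z0 = z0 ∧ t - 1 ≤ ((f z0 : Fin n) : ℕ) ∧ i0 = i0 then (2 : ℝ) else 0) = 2
        exact if_pos hc
      have e1 : lo z1 (f z1) i0 = 0 := by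
        simp only [hlo]
        split
        · next h => exact absurd h.1 hz01
        · rfl
      have h0' : (2 : ℝ) ≤ x i0 := e0 ▸ h0.1
      have h1' : x i0 ≤ hi z1 (f z1) i0 := h1.2
      have : hi z1 (f z1) i0 ≤ 1 := by
        simp only [hhi, e1, zero_add]
        split <;> norm_num
      linarith
    · intro hlt
      refine ⟨fun _ => 0, ?_⟩
      simp only [Set.mem_iInter]
      intro j i
      have hcond : ¬ (j = z0 ∧ t - 1 ≤ ((f j : Fin n) : ℕ) ∧ i = i0) := by
        rintro ⟨rfl, h2, -⟩
        omega
      have e : lo j (f j) i = 0 := by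
        simp only [hlo]
        split
        · next h => exact absurd h hcond
        · rfl
      constructor
      · rw [e]
      · show (0 : ℝ) ≤ hi j (f j) i
        simp only [hhi, e, zero_add]
        split <;> norm_num
  refine ⟨B, ?_, ?_, ?_⟩
  · intro j k
    refine ⟨lo j k, hi j k, hle j k, rfl, ?_⟩
    ext i
    simp only [Set.mem_setOf_eq, hhi, lt_add_iff_pos_right]
    split <;> simp_all
  · rintro ⟨S, hcard, hall⟩
    have hne : ∀ j, (S j).Nonempty := fun j => Finset.card_pos.mp (by rw [hcard]; omega)
    have hex : ∃ k ∈ S z0, t - 1 ≤ (k : ℕ) := by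
      by_contra h
      push_neg at h
      have hsub : S z0 ⊆ Finset.univ.filter (fun k : Fin n => (k : ℕ) < t - 1) :=
        fun k hk => Finset.mem_filter.mpr ⟨Finset.mem_univ _, h k hk⟩
      have hcf : (Finset.univ.filter (fun k : Fin n => (k : ℕ) < t - 1)).card ≤ t - 1 := by
        have := Finset.card_le_card_of_injOn (fun k : Fin n => (k : ℕ))
          (s := Finset.univ.filter (fun k : Fin n => (k : ℕ) < t - 1))
          (t := Finset.range (t - 1))
          (fun k hk => Finset.mem_range.mpr (Finset.mem_filter.mp hk).2)
          (fun a _ b _ hab => Fin.val_injective hab)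
        simpa using this
      have := Finset.card_le_card hsub
      rw [hcard] at this
      omega
    obtain ⟨k, hkS, hk⟩ := hex
    set f : ∀ j : Fin (r' + 1), Fin n := fun j => if h : j = z0 then k else (hne j).choose with hf
    have hfm : ∀ j, f j ∈ S j := by
      intro j
      simp only [hf]
      split
      · subst ‹j = z0›; exact hkS
      · exact (hne j).choose_spec
    have hNE := hall f hfm
    rw [key] at hNE
    have : f z0 = k := by simp [hf]
    omega
  · have hlt' : t - 1 ≤ n := by omega
    have hz00 : z0 = 0 := by simp [hz0, Fin.ext_iff]
    set emb : Fin (t - 1) × (Fin r' → Fin n) → (Fin (r' + 1) → Fin n) :=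
      fun p => Fin.cons (Fin.castLE hlt' p.1) p.2 with hemb
    have hembne : ∀ p, (⋂ j, B j (emb p j)).Nonempty := by
      intro p
      rw [key, hz00]
      simp only [hemb, Fin.cons_zero]
      exact p.1.2
    have hinj : Function.Injective emb := by
      intro p q hpq
      simp only [hemb] at hpq
      have h1 := congrFun hpq 0
      simp only [Fin.cons_zero] at h1
      have h2 : p.2 = q.2 := funext fun j => by
        have := congrFun hpq j.succ
        simpa [Fin.cons_succ] using this
      exact Prod.ext (Fin.castLE_injective _ h1) h2
    have hinj2 : Function.Injective
        (fun p : Fin (t - 1) × (Fin r' → Fin n) =>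
          (⟨emb p, hembne p⟩ : {f : Fin (r' + 1) → Fin n // (⋂ j, B j (f j)).Nonempty})) :=
      fun p q h => hinj (congrArg Subtype.val h)
    have hcardle := Nat.card_le_card_of_injective _ hinj2
    have hdom : Nat.card (Fin (t - 1) × (Fin r' → Fin n)) = (t - 1) * n ^ r' := by
      simp [Nat.card_eq_fintype_card, Fintype.card_fun]
    rw [hdom] at hcardle
    exact hcardle
end

section
/- In ℝ², let A be a finite indexed family (repetitions allowed) of m horizontal segments and let B be a finite indexed family of n vertical segments, and let t ≥ 2 be an integer. If the bipartite intersection graph G between A and B is K_{t,t}-free, then G has at most 27·t·(m + n) edges. -/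
open Set

/-- `S` is a horizontal segment `[a,b] × {c}` in the plane. -/
def IsHorizSeg (S : Set (Fin 2 → ℝ)) : Prop :=
  ∃ a b c : ℝ, a ≤ b ∧ S = {x | x 0 ∈ Set.Icc a b ∧ x 1 = c}

/-- `S` is a vertical segment `{c} × [a,b]` in the plane. -/
def IsVertSeg (S : Set (Fin 2 → ℝ)) : Prop :=
  ∃ a b c : ℝ, a ≤ b ∧ S = {x | x 0 = c ∧ x 1 ∈ Set.Icc a b}

/-!
Order the horizontal segments by height (ties broken by index) and sweep a vertical line from
left to right. The window of a horizontal segment `i` at abscissa `X` consists of the `2t - 1`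
highest segments alive at `X` below `i`.

Call an edge `(i, j)` deep if at least `2t - 1` neighbours of `j` lie below `i`; each vertical
segment has at most `2t - 1` edges that are not deep. The neighbours of `j` are consecutive among
the segments alive at its abscissa `x_j`, so for a deep edge the window of `i` at `x_j` consists
of neighbours of `j`. If the windows of `i` at `t` of its deep edges shared `t - 1` members, these
and `i` would span a `K_{t,t}`; so across any `t` deep edges at `i` more than `t` members leave
the window. Each departure is charged to the birth or death of a segment lying in the window of
`i` at that moment. A segment lies in the windows of at most `2t - 1` segments at a given
abscissa, so at most `2 (2t - 1) m` events are charged in total, and the number of edges is at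
most `(2t - 1) n + (t - 1) m + 2 (2t - 1) m ≤ 5 t (m + n)`.
-/

open Finset

namespace SegmentZarankiewicz

lemma card_filter_lt_le_of_injOn {β : Type*} {s : Finset β} {f : β → ℕ} (hf : Set.InjOn f s)
    (w : ℕ) : #{a ∈ s | f a < w} ≤ w := by
  simpa using card_le_card_of_injOn f (t := range w) (fun a ha => by simp_all)
    (hf.mono (filter_subset _ s))

lemma exists_subset_card_eq_forall_le {β γ : Type*} [LinearOrder γ] [DecidableEq β]
    (f : β → γ) {s : Finset β} {k : ℕ} (hk : k ≤ #s) :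
    ∃ T ⊆ s, #T = k ∧ ∀ j ∈ T, ∀ j' ∈ s \ T, f j ≤ f j' := by
  induction k with
  | zero => exact ⟨∅, empty_subset s, card_empty, by simp⟩
  | succ k ih =>
    obtain ⟨T, hTs, hT, hle⟩ := ih (by omega)
    obtain ⟨j₀, hj₀, hmin⟩ := (s \ T).exists_min_image f
      (card_pos.1 (by rw [card_sdiff_of_subset hTs]; omega))
    refine ⟨insert j₀ T, insert_subset (mem_sdiff.1 hj₀).1 hTs,
      by rw [card_insert_of_notMem (mem_sdiff.1 hj₀).2, hT], fun j hj j' hj' => ?_⟩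
    obtain ⟨hj's, hj'T⟩ := mem_sdiff.1 hj'
    replace hj'T : j' ∈ s \ T := mem_sdiff.2 ⟨hj's, fun h => hj'T (mem_insert_of_mem h)⟩
    obtain rfl | hj := mem_insert.1 hj
    · exact hmin j' hj'T
    · exact hle j hj j' hj'T

section Highest

variable {α : Type*} [LinearOrder α]

lemma strictMonoOn_card_filter_lt (s : Finset α) :
    StrictMonoOn (fun a => #{b ∈ s | b < a}) s := fun a ha a' _ h => by
  refine Finset.card_lt_card ⟨monotone_filter_right s fun b _ hb => hb.trans h, fun hsub => ?_⟩
  simpa using (mem_filter.1 (hsub (mem_filter.2 ⟨ha, h⟩))).2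

lemma strictAntiOn_card_filter_gt (s : Finset α) :
    StrictAntiOn (fun a => #{b ∈ s | a < b}) s := fun a _ a' ha' h => by
  refine Finset.card_lt_card ⟨monotone_filter_right s fun b _ hb => h.trans hb, fun hsub => ?_⟩
  simpa using (mem_filter.1 (hsub (mem_filter.2 ⟨ha', h⟩))).2

def highest (w : ℕ) (s : Finset α) : Finset α := {a ∈ s | #{b ∈ s | a < b} < w}

variable {w : ℕ} {s t : Finset α}

lemma highest_subset : highest w s ⊆ s := filter_subset _ _

lemma mem_highest {a : α} : a ∈ highest w s ↔ a ∈ s ∧ #{b ∈ s | a < b} < w := mem_filter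

lemma card_highest_le : #(highest w s) ≤ w :=
  card_filter_lt_le_of_injOn (strictAntiOn_card_filter_gt s).injOn w

lemma le_card_highest (h : w ≤ #s) : w ≤ #(highest w s) := by
  set r : α → ℕ := fun a => #{b ∈ s | a < b}
  have himage : s.image r = range #s := by
    refine eq_of_subset_of_card_le (fun k hk => ?_) ?_
    · obtain ⟨a, ha, rfl⟩ := mem_image.1 hk
      exact mem_range.2 (Finset.card_lt_card (filter_ssubset.2 ⟨a, ha, lt_irrefl a⟩))
    · rw [card_range, card_image_of_injOn (strictAntiOn_card_filter_gt s).injOn]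
  calc w = #(range w) := (card_range w).symm
    _ ≤ #((highest w s).image r) := Finset.card_le_card fun k hk => by
      obtain ⟨a, ha, rfl⟩ := mem_image.1 (himage ▸ mem_range.2 ((mem_range.1 hk).trans_le h))
      exact mem_image_of_mem r (mem_highest.2 ⟨ha, mem_range.1 hk⟩)
    _ ≤ #(highest w s) := card_image_le

lemma mem_highest_of_lt {a b : α} (ha : a ∈ highest w s) (hb : b ∈ s) (hab : a < b) :
    b ∈ highest w s := by
  refine mem_highest.2 ⟨hb, lt_of_le_of_lt (Finset.card_le_card ?_) (mem_highest.1 ha).2⟩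
  exact monotone_filter_right s fun c _ hc => hab.trans hc

/-- An element dropping out of the top `w` either leaves the set or is pushed out by an element
of `t \ s` entering the top `w`. -/
lemma card_highest_sdiff_highest_le :
    #(highest w s \ highest w t) ≤ #(highest w s \ t) + #(highest w t \ s) := by
  set D := (highest w s \ highest w t).filter (· ∈ t)
  have hsplit : highest w s \ highest w t ⊆ (highest w s \ t) ∪ D := fun a ha => by
    by_cases hat : a ∈ t
    · exact mem_union_right _ (mem_filter.2 ⟨ha, hat⟩)
    · exact mem_union_left _ (mem_sdiff.2 ⟨(mem_sdiff.1 ha).1, hat⟩)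
  suffices hD : #D ≤ #(highest w t \ s) from
    (Finset.card_le_card hsplit).trans ((Finset.card_union_le _ _).trans (by omega))
  obtain hD | ⟨d, hd⟩ := D.eq_empty_or_nonempty
  · simp [hD]
  obtain ⟨⟨hds, hdt'⟩, hdt⟩ := by simpa [D, mem_sdiff] using hd
  have habove : ∀ c ∈ highest w t, d < c := fun c hc => by
    by_contra! hcd
    rcases hcd.lt_or_eq with hlt | rfl
    · exact hdt' (mem_highest_of_lt hc hdt hlt)
    · exact hdt' hc
  have hwt : w ≤ #(highest w t) := by
    refine le_card_highest ?_
    have hrank : w ≤ #{b ∈ t | d < b} := by simpa [mem_highest, hdt] using hdt'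
    exact hrank.trans (Finset.card_lt_card (filter_ssubset.2 ⟨d, hdt, lt_irrefl d⟩)).le
  have hunion : Disjoint D (highest w t ∩ s) ∧ D ∪ (highest w t ∩ s) ⊆ highest w s := by
    refine ⟨disjoint_left.2 fun c hcD hc => ?_, union_subset (fun c hc => ?_) fun c hc => ?_⟩
    · exact (mem_sdiff.1 (mem_filter.1 hcD).1).2 (mem_inter.1 hc).1
    · exact (mem_sdiff.1 (mem_filter.1 hc).1).1
    · exact mem_highest_of_lt hds (mem_inter.1 hc).2 (habove c (mem_inter.1 hc).1)
  have key : #D + #(highest w t ∩ s) ≤ #(highest w t ∩ s) + #(highest w t \ s) :=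
    calc #D + #(highest w t ∩ s) = #(D ∪ (highest w t ∩ s)) :=
          (card_union_of_disjoint hunion.1).symm
      _ ≤ #(highest w s) := Finset.card_le_card hunion.2
      _ ≤ #(highest w t) := card_highest_le.trans hwt
      _ = #(highest w t ∩ s) + #(highest w t \ s) := (card_inter_add_card_sdiff _ _).symm
  omega

end Highest

lemma le_of_le_on_gaps {α : Type*} [LinearOrder α] {D R : α → α → ℕ} (E : Finset α)
    (hD : ∀ X c Y, X ≤ c → c ≤ Y → D X Y ≤ D X c + D c Y)
    (hR : ∀ X c Y, X ≤ c → c ≤ Y → R X c + R c Y ≤ R X Y)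
    (hgap : ∀ X Y, X ≤ Y → (∀ c ∈ E, c ∉ Set.Ioo X Y) → D X Y ≤ R X Y)
    {X Y : α} (hXY : X ≤ Y) : D X Y ≤ R X Y := by
  induction E using Finset.induction_on with
  | empty => exact hgap X Y hXY (by simp)
  | insert c E _ ih =>
    refine ih fun X Y hXY hE => ?_
    have hsub : ∀ {X' Y'}, X ≤ X' → Y' ≤ Y → c ∉ Set.Ioo X' Y' →
        ∀ c' ∈ insert c E, c' ∉ Set.Ioo X' Y' := fun hX hY hc c' hc' h =>
      (mem_insert.1 hc').elim (fun e => hc (e ▸ h))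
        fun hc' => hE c' hc' ⟨hX.trans_lt h.1, h.2.trans_le hY⟩
    by_cases hc : c ∈ Set.Ioo X Y
    · calc D X Y ≤ D X c + D c Y := hD X c Y hc.1.le hc.2.le
        _ ≤ R X c + R c Y :=
          add_le_add (hgap X c hc.1.le (hsub le_rfl hc.2.le fun h => lt_irrefl c h.2))
            (hgap c Y hc.2.le (hsub hc.1.le le_rfl fun h => lt_irrefl c h.1))
        _ ≤ R X Y := hR X c Y hc.1.le hc.2.le
    · exact hgap X Y hXY (hsub le_rfl le_rfl hc)

section Sweep

variable {ι : Type*} [Fintype ι] [LinearOrder ι] (a b : ι → ℝ) (w : ℕ)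

noncomputable def aliveBelow (i : ι) (X : ℝ) : Finset ι :=
  {h | X ∈ Set.Icc (a h) (b h) ∧ h < i}

noncomputable def window (i : ι) (X : ℝ) : Finset ι := highest w (aliveBelow a b i X)

/-- The events at which the window of `i` can lose a member: births in `(X, Y]` and deaths in
`[X, Y)` of segments lying in the window at that moment. The half-open intervals make `churn`
additive over adjacent intervals. -/
noncomputable def churn (i : ι) (X Y : ℝ) : ℕ :=
  #{h | a h ∈ Set.Ioc X Y ∧ h ∈ window a b w i (a h)} +
    #{h | b h ∈ Set.Ico X Y ∧ h ∈ window a b w i (b h)}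

variable {a b w} {i : ι} {X Y : ℝ}

@[simp]
lemma mem_aliveBelow {h : ι} :
    h ∈ aliveBelow a b i X ↔ X ∈ Set.Icc (a h) (b h) ∧ h < i := by
  simp [aliveBelow]

lemma card_filter_mem_union {β : Type*} (f : ι → β) {S T U : Set β} (hST : Disjoint S T)
    (hU : S ∪ T = U) (p : ι → Prop) [DecidablePred p] [DecidablePred (f · ∈ S)]
    [DecidablePred (f · ∈ T)] [DecidablePred (f · ∈ U)] :
    #{h | f h ∈ S ∧ p h} + #{h | f h ∈ T ∧ p h} = #{h | f h ∈ U ∧ p h} := by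
  rw [← card_union_of_disjoint]
  · congr 1
    ext h
    simp [← hU, or_and_right]
  · exact disjoint_filter.2 fun h _ hS hT => hST.ne_of_mem hS.1 hT.1 rfl

lemma churn_add {c : ℝ} (hXc : X ≤ c) (hcY : c ≤ Y) :
    churn a b w i X c + churn a b w i c Y = churn a b w i X Y := by
  have hIoc := card_filter_mem_union a (Set.Ioc_disjoint_Ioc_of_le (a := X) (d := Y) (le_refl c))
    (Set.Ioc_union_Ioc_eq_Ioc hXc hcY) fun h => h ∈ window a b w i (a h)
  have hIco := card_filter_mem_union b (Set.Ico_disjoint_Ico_same (a := X) (b := c) (c := Y))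
    (Set.Ico_union_Ico_eq_Ico hXc hcY) fun h => h ∈ window a b w i (b h)
  simp only [churn]
  omega

/-- With no event strictly between `X` and `Y`, a segment alive at `X` but not at `Y` dies at
`X`, and one alive at `Y` but not at `X` is born at `Y`. -/
lemma card_window_sdiff_le_churn_of_gap (hXY : X ≤ Y)
    (hgap : ∀ h, a h ∉ Set.Ioo X Y ∧ b h ∉ Set.Ioo X Y) :
    #(window a b w i X \ window a b w i Y) ≤ churn a b w i X Y := by
  calc #(window a b w i X \ window a b w i Y)
      ≤ #(window a b w i X \ aliveBelow a b i Y) + #(window a b w i Y \ aliveBelow a b i X) :=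
        card_highest_sdiff_highest_le
    _ ≤ #{h | b h ∈ Set.Ico X Y ∧ h ∈ window a b w i (b h)} +
        #{h | a h ∈ Set.Ioc X Y ∧ h ∈ window a b w i (a h)} := by
      refine add_le_add (Finset.card_le_card fun h hh => ?_)
          (Finset.card_le_card fun h hh => ?_) <;>
        obtain ⟨hwin, hnot⟩ := mem_sdiff.1 hh <;>
        obtain ⟨⟨hah, hbh⟩, hhi⟩ := mem_aliveBelow.1 (highest_subset hwin) <;>
        simp only [mem_aliveBelow, Set.mem_Icc, not_and, mem_filter, Finset.mem_univ, true_and,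
          Set.mem_Ico, Set.mem_Ioc] at hnot ⊢
      · have hbY : b h < Y := lt_of_not_ge fun hYb => hnot ⟨hah.trans hXY, hYb⟩ hhi
        have hbX : b h = X := le_antisymm (not_lt.1 fun hXb => (hgap h).2 ⟨hXb, hbY⟩) hbh
        exact ⟨⟨hbX.ge, hbY⟩, hbX ▸ hwin⟩
      · have hXa : X < a h := lt_of_not_ge fun haX => hnot ⟨haX, hXY.trans hbh⟩ hhi
        have haY : a h = Y := le_antisymm hah (not_lt.1 fun haY => (hgap h).1 ⟨hXa, haY⟩)
        exact ⟨⟨hXa, haY.le⟩, haY ▸ hwin⟩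
    _ = churn a b w i X Y := add_comm _ _

lemma card_window_sdiff_le_churn (hXY : X ≤ Y) :
    #(window a b w i X \ window a b w i Y) ≤ churn a b w i X Y :=
  le_of_le_on_gaps (univ.image a ∪ univ.image b)
    (fun _ _ _ _ _ =>
      (Finset.card_le_card (sdiff_triangle _ _ _)).trans (Finset.card_union_le _ _))
    (fun _ _ _ hXc hcY => (churn_add hXc hcY).le)
    (fun _ _ hXY hE => card_window_sdiff_le_churn_of_gap hXY fun h =>
      ⟨hE _ (by simp), hE _ (by simp)⟩)
    hXY

lemma card_filter_exists_not_mem_window_le (P : Finset ℝ) (hP : ∀ p ∈ P, p ∈ Set.Icc X Y) :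
    #{z ∈ window a b w i X | ∃ p ∈ P, z ∉ window a b w i p} ≤ churn a b w i X Y := by
  induction P using induction_on_min generalizing X with
  | empty => simp
  | insert p P hpP ih =>
    obtain ⟨hXp, hpY⟩ := hP p (mem_insert_self p P)
    calc _ ≤ #((window a b w i X \ window a b w i p) ∪
          {z ∈ window a b w i p | ∃ q ∈ P, z ∉ window a b w i q}) := by
          refine Finset.card_le_card fun z hz => ?_
          obtain ⟨hzX, q, hq, hzq⟩ := mem_filter.1 hz
          by_cases hzp : z ∈ window a b w i p
          · obtain rfl | hq := mem_insert.1 hq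
            · exact absurd hzp hzq
            · exact mem_union_right _ (mem_filter.2 ⟨hzp, q, hq, hzq⟩)
          · exact mem_union_left _ (mem_sdiff.2 ⟨hzX, hzp⟩)
      _ ≤ churn a b w i X p + churn a b w i p Y :=
          (Finset.card_union_le _ _).trans (add_le_add (card_window_sdiff_le_churn hXp)
            (ih fun q hq => ⟨(hpP q hq).le, (hP q (mem_insert_of_mem hq)).2⟩))
      _ = churn a b w i X Y := churn_add hXp hpY

/-- The number of alive segments strictly between `h` and `i` grows strictly with `i`. -/
lemma card_filter_mem_window_le (h : ι) (X : ℝ) :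
    #{i | X ∈ Set.Icc (a i) (b i) ∧ h ∈ window a b w i X} ≤ w := by
  set s : Finset ι := {g | X ∈ Set.Icc (a g) (b g) ∧ h < g}
  refine (Finset.card_le_card fun i hi => ?_).trans
    (card_filter_lt_le_of_injOn (strictMonoOn_card_filter_lt s).injOn w)
  obtain ⟨hiX, hwin⟩ := by simpa using hi
  obtain ⟨hhX, hhi⟩ := mem_aliveBelow.1 (highest_subset hwin)
  have hrank := (mem_highest.1 hwin).2
  refine mem_filter.2 ⟨by simp [s, hiX, hhi], ?_⟩
  convert hrank using 2
  ext g
  simp only [s, mem_filter, Finset.mem_univ, true_and, mem_aliveBelow]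
  tauto

lemma sum_card_filter_mem_window_le (f : ι → ℝ) (I : ι → Set ℝ)
    (hI : ∀ i, I i ⊆ Set.Icc (a i) (b i)) [∀ i h, Decidable (f h ∈ I i)] :
    ∑ i, #{h | f h ∈ I i ∧ h ∈ window a b w i (f h)} ≤ w * Fintype.card ι := by
  calc ∑ i, #{h | f h ∈ I i ∧ h ∈ window a b w i (f h)}
      = ∑ h, #{i | f h ∈ I i ∧ h ∈ window a b w i (f h)} :=
        sum_card_bipartiteAbove_eq_sum_card_bipartiteBelow _
    _ ≤ ∑ h : ι, w := sum_le_sum fun h _ => (Finset.card_le_card (monotone_filter_right _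
        fun i _ hi => ⟨hI i hi.1, hi.2⟩)).trans (card_filter_mem_window_le h (f h))
    _ = w * Fintype.card ι := by simp [mul_comm]

lemma sum_churn_le : ∑ i, churn a b w i (a i) (b i) ≤ 2 * w * Fintype.card ι := by
  have hbirths := sum_card_filter_mem_window_le (w := w) a (fun i => Set.Ioc (a i) (b i))
    fun _ => Set.Ioc_subset_Icc_self
  have hdeaths := sum_card_filter_mem_window_le (w := w) b (fun i => Set.Ico (a i) (b i))
    fun _ => Set.Ico_subset_Icc_self
  simp only [churn, sum_add_distrib]
  linarith

end Sweep

section Geometry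

variable {ι κ : Type*} [Fintype ι] [LinearOrder ι]

def BicliqueFree (t : ℕ) (r : ι → κ → Prop) : Prop :=
  ¬ ∃ (S : Finset ι) (T : Finset κ), #S = t ∧ #T = t ∧ ∀ i ∈ S, ∀ j ∈ T, r i j

variable (a b y : ι → ℝ) (x s e : κ → ℝ) (w : ℕ)

def Meets (i : ι) (j : κ) : Prop := x j ∈ Set.Icc (a i) (b i) ∧ y i ∈ Set.Icc (s j) (e j)

noncomputable instance (i : ι) (j : κ) : Decidable (Meets a b y x s e i j) := by
  unfold Meets; infer_instance

def DeepMeets (i : ι) (j : κ) : Prop :=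
  Meets a b y x s e i j ∧ w ≤ #{h | Meets a b y x s e h j ∧ h < i}

noncomputable instance (i : ι) (j : κ) : Decidable (DeepMeets a b y x s e w i j) := by
  unfold DeepMeets; infer_instance

variable {a b y x s e w}

lemma meets_of_mem_window (hy : Monotone y) {i g : ι} {j : κ}
    (hij : DeepMeets a b y x s e w i j) (hg : g ∈ window a b w i (x j)) :
    Meets a b y x s e g j := by
  obtain ⟨hgX, hgi⟩ := mem_aliveBelow.1 (highest_subset hg)
  refine ⟨hgX, ?_, (hy hgi.le).trans hij.1.2.2⟩
  by_contra! hgs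
  have hsub : ({h | Meets a b y x s e h j ∧ h < i} : Finset ι) ⊆
      {h ∈ aliveBelow a b i (x j) | g < h} :=
    fun h hh => by
      obtain ⟨hmeets, hhi⟩ := by simpa using hh
      refine mem_filter.2 ⟨mem_aliveBelow.2 ⟨hmeets.1, hhi⟩, lt_of_not_ge fun hhg => ?_⟩
      exact (hgs.trans_le hmeets.2.1).not_ge (hy hhg)
  exact (mem_highest.1 hg).2.not_ge (hij.2.trans (Finset.card_le_card hsub))

lemma card_filter_meets_le (j : κ) :
    #{i | Meets a b y x s e i j} ≤ #{i | DeepMeets a b y x s e w i j} + w := by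
  set M : Finset ι := {i | Meets a b y x s e i j}
  rw [← card_filter_add_card_filter_not (s := M) (DeepMeets a b y x s e w · j)]
  refine add_le_add (Finset.card_le_card fun i hi => by simpa using (mem_filter.1 hi).2) ?_
  refine (Finset.card_le_card (monotone_filter_right M fun i hi hdeep => ?_)).trans
    (card_filter_lt_le_of_injOn (strictMonoOn_card_filter_lt M).injOn w)
  rw [filter_filter]
  exact lt_of_not_ge fun hw => hdeep ⟨(mem_filter.1 hi).2, hw⟩

variable {t : ℕ}

/-- Otherwise `t - 1` members of the first window survive in all the windows, and together with
`i` they span a `K_{t,t}`. -/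
lemma lt_churn_of_deepMeets (hy : Monotone y) (ht : 1 ≤ t)
    (hfree : BicliqueFree t (Meets a b y x s e)) {i : ι} {T : Finset κ} (hT : #T = t)
    (hdeep : ∀ j ∈ T, DeepMeets a b y x s e (2 * t - 1) i j) {j₀ : κ} (hj₀ : j₀ ∈ T) {Y : ℝ}
    (hY : ∀ j ∈ T, x j ∈ Set.Icc (x j₀) Y) :
    t < churn a b (2 * t - 1) i (x j₀) Y := by
  by_contra! hchurn
  set W := window a b (2 * t - 1) i (x j₀)
  have hW : 2 * t - 1 ≤ #W := le_card_highest <| (hdeep j₀ hj₀).2.trans <|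
    Finset.card_le_card fun h hh => by
      obtain ⟨hmeets, hhi⟩ := by simpa using hh
      exact mem_aliveBelow.2 ⟨hmeets.1, hhi⟩
  have hbad : #{z ∈ W | ¬ ∀ j ∈ T, z ∈ window a b (2 * t - 1) i (x j)} ≤ t :=
    calc _ = #{z ∈ W | ∃ p ∈ T.image x, z ∉ window a b (2 * t - 1) i p} := by
          congr 1
          ext z
          simp [W]
      _ ≤ churn a b (2 * t - 1) i (x j₀) Y :=
          card_filter_exists_not_mem_window_le _ (by simpa using hY)
      _ ≤ t := hchurn
  have hsplit := card_filter_add_card_filter_not (s := W)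
    fun z => ∀ j ∈ T, z ∈ window a b (2 * t - 1) i (x j)
  obtain ⟨Z, hZ, hZcard⟩ := exists_subset_card_eq
    (show t - 1 ≤ #{z ∈ W | ∀ j ∈ T, z ∈ window a b (2 * t - 1) i (x j)} by omega)
  have hiZ : i ∉ Z := fun hi =>
    lt_irrefl i (mem_aliveBelow.1 (highest_subset (mem_filter.1 (hZ hi)).1)).2
  refine hfree ⟨insert i Z, T, by rw [card_insert_of_notMem hiZ]; omega, hT,
    fun g hg j hj => ?_⟩
  obtain rfl | hg := mem_insert.1 hg
  · exact (hdeep j hj).1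
  · exact meets_of_mem_window hy (hdeep j hj) ((mem_filter.1 (hZ hg)).2 j hj)

lemma card_le_churn (hy : Monotone y) (ht : 1 ≤ t) (hfree : BicliqueFree t (Meets a b y x s e))
    (i : ι) (J : Finset κ) {X Y : ℝ}
    (hJ : ∀ j ∈ J, DeepMeets a b y x s e (2 * t - 1) i j ∧ x j ∈ Set.Icc X Y) :
    #J ≤ t - 1 + churn a b (2 * t - 1) i X Y := by
  classical
  induction J using strongInduction generalizing X with
  | H J ih =>
  by_cases hJt : #J < t
  · omega
  obtain ⟨T, hTJ, hT, hTle⟩ := exists_subset_card_eq_forall_le x (not_lt.1 hJt)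
  have hTne : T.Nonempty := card_pos.1 (by omega)
  obtain ⟨j₀, hj₀, hmin⟩ := T.exists_min_image x hTne
  obtain ⟨j₁, hj₁, hmax⟩ := T.exists_max_image x hTne
  have hblock := lt_churn_of_deepMeets hy ht hfree hT (fun j hj => (hJ j (hTJ hj)).1) hj₀
    (Y := x j₁) fun j hj => ⟨hmin j hj, hmax j hj⟩
  have hrest := ih (J \ T) (sdiff_ssubset hTJ hTne) (X := x j₁) fun j hj =>
    ⟨(hJ j (mem_sdiff.1 hj).1).1, hTle j₁ hj₁ j hj, (hJ j (mem_sdiff.1 hj).1).2.2⟩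
  have hX₀ := (hJ j₀ (hTJ hj₀)).2.1
  have h₁ := churn_add (a := a) (b := b) (w := 2 * t - 1) (i := i) hX₀ (hmin j₁ hj₁)
  have h₂ := churn_add (a := a) (b := b) (w := 2 * t - 1) (i := i) (hX₀.trans (hmin j₁ hj₁))
    (hJ j₁ (hTJ hj₁)).2.2
  have := card_sdiff_add_card_eq_card hTJ
  omega

theorem card_meets_le [Fintype κ] (hy : Monotone y) (ht : 1 ≤ t)
    (hfree : BicliqueFree t (Meets a b y x s e)) :
    #{p : ι × κ | Meets a b y x s e p.1 p.2} ≤ 5 * t * (Fintype.card ι + Fintype.card κ) := by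
  set w := 2 * t - 1
  have hrow : ∀ i, #{j | DeepMeets a b y x s e w i j} ≤ t - 1 + churn a b w i (a i) (b i) :=
    fun i => card_le_churn hy ht hfree i _ fun j hj =>
      ⟨(mem_filter.1 hj).2, (mem_filter.1 hj).2.1.1⟩
  have hchurn := sum_churn_le (a := a) (b := b) (w := w)
  have hmeets : #{p : ι × κ | Meets a b y x s e p.1 p.2} ≤
      w * Fintype.card κ + (t - 1) * Fintype.card ι + 2 * w * Fintype.card ι :=
    calc #{p : ι × κ | Meets a b y x s e p.1 p.2} = ∑ j, #{i | Meets a b y x s e i j} := by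
          simp only [card_filter]
          exact Fintype.sum_prod_type_right _
      _ ≤ ∑ j : κ, (#{i | DeepMeets a b y x s e w i j} + w) :=
          sum_le_sum fun j _ => card_filter_meets_le j
      _ = w * Fintype.card κ + ∑ i, #{j | DeepMeets a b y x s e w i j} := by
          rw [sum_add_distrib, add_comm]
          congr 1
          · simp [mul_comm]
          · exact (sum_card_bipartiteAbove_eq_sum_card_bipartiteBelow _).symm
      _ ≤ w * Fintype.card κ + ∑ i, (t - 1 + churn a b w i (a i) (b i)) :=
          Nat.add_le_add_left (sum_le_sum fun i _ => hrow i) _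
      _ ≤ _ := by
          rw [sum_add_distrib]
          simp only [sum_const, card_univ, smul_eq_mul]
          linarith
  have hw : w ≤ 2 * t := by omega
  have ht' : t - 1 ≤ t := by omega
  nlinarith

end Geometry

lemma horizSeg_inter_vertSeg_nonempty_iff {a b c a' b' c' : ℝ} :
    ({p : Fin 2 → ℝ | p 0 ∈ Set.Icc a b ∧ p 1 = c} ∩
      {p | p 0 = c' ∧ p 1 ∈ Set.Icc a' b'}).Nonempty ↔
      c' ∈ Set.Icc a b ∧ c ∈ Set.Icc a' b' := by
  constructor
  · rintro ⟨p, ⟨hp0, hp1⟩, hp0', hp1'⟩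
    exact ⟨hp0' ▸ hp0, hp1 ▸ hp1'⟩
  · rintro ⟨h0, h1⟩
    exact ⟨![c', c], ⟨by simpa using h0, by simp⟩, by simp, by simpa using h1⟩

end SegmentZarankiewicz

open SegmentZarankiewicz in
/-- `K_{t,t}`-free families of horizontal/vertical segments in the plane
have at most `27 t (m + n)` intersecting pairs. -/
theorem stmt6 (m n t : ℕ) (ht : 2 ≤ t)
    (A : Fin m → Set (Fin 2 → ℝ)) (B : Fin n → Set (Fin 2 → ℝ))
    (hA : ∀ i, IsHorizSeg (A i)) (hB : ∀ j, IsVertSeg (B j))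
    (hfree : ¬ ∃ (S : Finset (Fin m)) (T : Finset (Fin n)), S.card = t ∧ T.card = t ∧
        ∀ i ∈ S, ∀ j ∈ T, (A i ∩ B j).Nonempty) :
    Nat.card {p : Fin m × Fin n // (A p.1 ∩ B p.2).Nonempty} ≤ 27 * t * (m + n) := by
  classical
  choose a b y hA using hA
  choose s e x hB using hB
  have hmeets : ∀ i j, (A i ∩ B j).Nonempty ↔ Meets a b y x s e i j := fun i j => by
    rw [(hA i).2, (hB j).2]
    exact horizSeg_inter_vertSeg_nonempty_iff
  -- `Fin m` ordered by height, ties broken by index, in place of its usual order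
  let byHeight : LinearOrder (Fin m) := LinearOrder.lift' (fun i => toLex (y i, i))
    fun i i' h => by simpa using congrArg (fun p => (ofLex p).2) h
  have hy : @Monotone _ _ byHeight.toPartialOrder.toPreorder _ y := fun i i' h =>
    (Prod.Lex.le_iff.1 h).elim le_of_lt (·.1.le)
  have hfree' : BicliqueFree t (Meets a b y x s e) := by
    simpa only [BicliqueFree, hmeets] using hfree
  calc Nat.card {p : Fin m × Fin n // (A p.1 ∩ B p.2).Nonempty}
      = #{p : Fin m × Fin n | Meets a b y x s e p.1 p.2} := by
        rw [Nat.card_eq_fintype_card, Fintype.card_subtype]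
        simp only [hmeets]
    _ ≤ 5 * t * (m + n) := by simpa using card_meets_le hy (by omega) hfree'
    _ ≤ 27 * t * (m + n) := by gcongr; norm_num
end

section
/- Let d ≥ 2 be an integer and let (B_1, …, B_d) be a canonical family in ℝ^d, with B_i indexed by a finite set I_i. Then there exists a separated family (B'_1, …, B'_d) in ℝ^d, with B'_i indexed by the same set I_i, such that for every tuple of indices (j_1, …, j_d) ∈ I_1 × ⋯ × I_d, the boxes B'_1(j_1), …, B'_d(j_d) have a common point if and only if the boxes B_1(j_1), …, B_d(j_d) have a common point. -/
open Set

/-- every canonical family can be perturbed into a separated family with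
the same intersection pattern. -/
theorem stmt10 (d : ℕ) (hd : 2 ≤ d) (I : Fin d → Type) [∀ i, Finite (I i)]
    (B : ∀ i : Fin d, I i → Set (Fin d → ℝ))
    (hB : ∀ i k, IsBoxDir (B i k) {j | j ≠ i}) :
    ∃ B' : ∀ i : Fin d, I i → Set (Fin d → ℝ),
      (∀ i k, IsBoxDir (B' i k) {j | j ≠ i}) ∧
      (∀ i, ∀ k l : I i, k ≠ l → ∀ x ∈ B' i k, ∀ y ∈ B' i l, x i ≠ y i) ∧
      (∀ f : ∀ i : Fin d, I i,
        ((⋂ i, B' i (f i)).Nonempty ↔ (⋂ i, B i (f i)).Nonempty)) := by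
  classical
  haveI : ∀ i, Fintype (I i) := fun i => Fintype.ofFinite (I i)
  choose lo hi hlh hBeq hdir using hB
  -- each box of family i is degenerate at coordinate i
  have hdeg : ∀ i k, hi i k i = lo i k i := by
    intro i k
    have h := Set.ext_iff.mp (hdir i k) i
    simp only [Set.mem_setOf_eq, ne_eq, not_true_eq_false] at h
    have : ¬ lo i k i < hi i k i := by
      intro hlt; exact absurd (h.mpr hlt) (by simp)
    exact le_antisymm (not_lt.mp this) (hlh i k i)
  -- the finite set of all endpoint values at coordinate j
  set E : Fin d → Finset ℝ := fun j =>
    (Finset.univ : Finset ((i : Fin d) × I i)).image (fun p => lo p.1 p.2 j) ∪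
    (Finset.univ : Finset ((i : Fin d) × I i)).image (fun p => hi p.1 p.2 j) with hE
  have hloE : ∀ i k j, lo i k j ∈ E j := fun i k j =>
    Finset.mem_union_left _ (Finset.mem_image.mpr ⟨⟨i, k⟩, Finset.mem_univ _, rfl⟩)
  have hhiE : ∀ i k j, hi i k j ∈ E j := fun i k j =>
    Finset.mem_union_right _ (Finset.mem_image.mpr ⟨⟨i, k⟩, Finset.mem_univ _, rfl⟩)
  -- the rank function with gaps
  set φ : Fin d → ℝ → ℝ := fun j v => (((E j).filter (fun e => e < v)).card : ℝ) with hφ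
  have φmono : ∀ j a b, a ≤ b → φ j a ≤ φ j b := by
    intro j a b hab
    have : ((E j).filter (fun e => e < a)) ⊆ ((E j).filter (fun e => e < b)) := by
      intro e he
      simp only [Finset.mem_filter] at he ⊢
      exact ⟨he.1, lt_of_lt_of_le he.2 hab⟩
    simp only [hφ]
    exact_mod_cast Finset.card_le_card this
  have φgap : ∀ j a b, a ∈ E j → a < b → φ j a + 1 ≤ φ j b := by
    intro j a b haE hab
    have hnot : a ∉ ((E j).filter (fun e => e < a)) := by
      simp [Finset.mem_filter]
    have hsub : insert a ((E j).filter (fun e => e < a)) ⊆ ((E j).filter (fun e => e < b)) := by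
      intro e he
      rcases Finset.mem_insert.mp he with h | h
      · subst h; exact Finset.mem_filter.mpr ⟨haE, hab⟩
      · simp only [Finset.mem_filter] at h ⊢
        exact ⟨h.1, h.2.trans hab⟩
    have := Finset.card_le_card hsub
    rw [Finset.card_insert_of_notMem hnot] at this
    have : (((E j).filter (fun e => e < a)).card : ℝ) + 1 ≤
        (((E j).filter (fun e => e < b)).card : ℝ) := by exact_mod_cast this
    simpa [hφ] using this
  -- the small distinct shifts
  set δ : ∀ i, I i → ℝ := fun i k => 1 / (8 + ((Fintype.equivFin (I i) k : ℕ) : ℝ)) with hδ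
  have hδpos : ∀ i k, 0 < δ i k := by
    intro i k
    apply div_pos one_pos
    positivity
  have hδle : ∀ i k, δ i k ≤ 1 / 8 := by
    intro i k
    apply div_le_div_of_nonneg_left one_pos.le (by norm_num)
    have : (0:ℝ) ≤ ((Fintype.equivFin (I i) k : ℕ) : ℝ) := Nat.cast_nonneg _
    linarith
  have hδinj : ∀ i (k l : I i), δ i k = δ i l → k = l := by
    intro i k l h
    have hk : (0:ℝ) < 8 + ((Fintype.equivFin (I i) k : ℕ) : ℝ) := by positivity
    have hl : (0:ℝ) < 8 + ((Fintype.equivFin (I i) l : ℕ) : ℝ) := by positivity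
    rw [hδ] at h
    simp only [div_eq_div_iff hk.ne' hl.ne', one_mul] at h
    have : ((Fintype.equivFin (I i) k : ℕ) : ℝ) = ((Fintype.equivFin (I i) l : ℕ) : ℝ) := by
      linarith
    have : (Fintype.equivFin (I i) k : ℕ) = (Fintype.equivFin (I i) l : ℕ) := by
      exact_mod_cast this
    exact (Fintype.equivFin (I i)).injective (Fin.val_injective this)
  -- the new corner functions
  set lo' : ∀ i, I i → Fin d → ℝ := fun i k j =>
    if j = i then φ i (lo i k i) + δ i k else φ j (lo i k j) - 1/4 with hlo'
  set hi' : ∀ i, I i → Fin d → ℝ := fun i k j =>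
    if j = i then φ i (lo i k i) + δ i k else φ j (hi i k j) + 1/4 with hhi'
  have hlh' : ∀ i k j, lo' i k j ≤ hi' i k j := by
    intro i k j
    by_cases h : j = i
    · simp [hlo', hhi', h]
    · simp only [hlo', hhi', if_neg h]
      have := φmono j _ _ (hlh i k j)
      linarith
  refine ⟨fun i k => boxSet (lo' i k) (hi' i k), ?_, ?_, ?_⟩
  · -- IsBoxDir
    intro i k
    refine ⟨lo' i k, hi' i k, hlh' i k, rfl, ?_⟩
    ext j
    simp only [Set.mem_setOf_eq, ne_eq]
    constructor
    · intro hji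
      simp only [hlo', hhi', if_neg hji]
      have := φmono j _ _ (hlh i k j)
      linarith
    · intro hlt hji
      subst hji
      simp [hlo', hhi'] at hlt
  · -- separation
    intro i k l hkl x hx y hy
    have hxi : x i = φ i (lo i k i) + δ i k := by
      have := hx i
      simp only [Set.mem_Icc, hlo', hhi', if_pos rfl] at this
      linarith [this.1, this.2]
    have hyi : y i = φ i (lo i l i) + δ i l := by
      have := hy i
      simp only [Set.mem_Icc, hlo', hhi', if_pos rfl] at this
      linarith [this.1, this.2]
    rw [hxi, hyi]
    intro heq
    rcases lt_trichotomy (lo i k i) (lo i l i) with h | h | h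
    · have := φgap i _ _ (hloE i k i) h
      have h1 := hδle i k
      have h2 := hδpos i l
      linarith
    · rw [h] at heq
      exact hkl (hδinj i k l (by linarith))
    · have := φgap i _ _ (hloE i l i) h
      have h1 := hδle i l
      have h2 := hδpos i k
      linarith
  · -- intersection pattern
    intro f
    -- general nonemptiness criterion
    have crit : ∀ (L H : ∀ i : Fin d, Fin d → ℝ),
        ((⋂ i, boxSet (L i) (H i)).Nonempty ↔
          ∀ j, ∃ t : ℝ, ∀ i, L i j ≤ t ∧ t ≤ H i j) := by
      intro L H
      constructor
      · rintro ⟨x, hx⟩ j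
        refine ⟨x j, fun i => ?_⟩
        have := Set.mem_iInter.mp hx i j
        exact ⟨this.1, this.2⟩
      · intro h
        choose t ht using h
        exact ⟨t, Set.mem_iInter.mpr fun i j => ⟨(ht j i).1, (ht j i).2⟩⟩
    have hB'crit := crit (fun i => lo' i (f i)) (fun i => hi' i (f i))
    have hBrw : (⋂ i, B i (f i)) = ⋂ i, boxSet (lo i (f i)) (hi i (f i)) := by
      exact Set.iInter_congr fun i => hBeq i (f i)
    rw [hB'crit, hBrw, crit]
    -- reduce each coordinate's ∃ to the value of the degenerate box
    have redO : ∀ j, (∃ t : ℝ, ∀ i, lo i (f i) j ≤ t ∧ t ≤ hi i (f i) j) ↔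
        ∀ i, lo i (f i) j ≤ lo j (f j) j ∧ lo j (f j) j ≤ hi i (f i) j := by
      intro j
      constructor
      · rintro ⟨t, ht⟩ i
        have hj := ht j
        have : t = lo j (f j) j := le_antisymm (by rw [← hdeg j (f j)]; exact hj.2) hj.1
        rw [← this]; exact ht i
      · intro h; exact ⟨lo j (f j) j, h⟩
    have redN : ∀ j, (∃ t : ℝ, ∀ i, lo' i (f i) j ≤ t ∧ t ≤ hi' i (f i) j) ↔
        ∀ i, lo' i (f i) j ≤ lo' j (f j) j ∧ lo' j (f j) j ≤ hi' i (f i) j := by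
      intro j
      constructor
      · rintro ⟨t, ht⟩ i
        have hj := ht j
        have hdegj : hi' j (f j) j = lo' j (f j) j := by simp [hlo', hhi']
        have : t = lo' j (f j) j := le_antisymm (by rw [← hdegj]; exact hj.2) hj.1
        rw [← this]; exact ht i
      · intro h; exact ⟨lo' j (f j) j, h⟩
    constructor
    · intro h j
      rw [redO]
      have hj := (redN j).mp (h j)
      intro i
      by_cases hij : i = j
      · subst hij
        rw [hdeg i (f i)]
        exact ⟨le_refl _, le_refl _⟩
      · have hji : ¬ j = i := fun h => hij h.symm
        have hi2 := hj i
        simp only [hlo', hhi', if_neg hji, if_pos rfl] at hi2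
        constructor
        · by_contra hcon
          push_neg at hcon
          have := φgap j _ _ (hloE j (f j) j) hcon
          have h1 := hδle j (f j)
          linarith [hi2.1]
        · by_contra hcon
          push_neg at hcon
          have := φgap j _ _ (hhiE i (f i) j) hcon
          have h2 := hδpos j (f j)
          linarith [hi2.2]
    · intro h j
      rw [redN]
      have hj := (redO j).mp (h j)
      intro i
      by_cases hij : i = j
      · subst hij
        exact ⟨le_refl _, hlh' i (f i) i⟩
      · have hji : ¬ j = i := fun h => hij h.symm
        have hi2 := hj i
        simp only [hlo', hhi', if_neg hji, if_pos rfl]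
        have hm1 := φmono j _ _ hi2.1
        have hm2 := φmono j _ _ hi2.2
        have h1 := hδpos j (f j)
        have h2 := hδle j (f j)
        constructor <;> linarith
end

section
/- Let r ≥ 2 and t ≥ 2 be integers and let F = (F_1, …, F_r) be any r-direction-vector in ℝ¹ (so each F_j is either ∅ or {1}). Every F-family (B_1, …, B_r) in ℝ¹ with |B_j| = n_j for j = 1, …, r whose intersection hypergraph H is K_{t,…,t}^{(r)}-free satisfies: the number of hyperedges of H is strictly less than 4^{r-1} · g_t(n_1, …, n_r). -/
open Set

/-!
Charge each hyperedge to the family `k` whose interval has the leftmost right endpoint `p`: every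
other interval of the hyperedge contains `p`. Sort the right endpoints of family `k` as
`q 0 ≤ q 1 ≤ ⋯` and attach to `q a` the window `[q a, q (a + t - 1)]`. By
`K_{t,…,t}`-freeness some other family has fewer than `t` intervals containing the whole window, and
an interval of that family through a point of the window either contains the window or has an
endpoint in it; a fixed endpoint lies in at most `t - 1` windows. The last `t - 1` points, which
have no window of their own, are bounded trivially. Summing over all points gives
`e(H) ≤ 4 (t - 1) (r - 1) ∑ⱼ ∏_{i ≠ j} nᵢ`, which is less than `4^(r-1) g_t(n)`.
-/

open Finset
open scoped Classical

theorem card_filter_mem_le_of_disjoint {α : Type*} (I : ℕ → Set α) {d : ℕ}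
    (hI : ∀ i i', i + d ≤ i' → Disjoint (I i) (I i')) (x : α) [DecidablePred (x ∈ I ·)]
    (s : Finset ℕ) :
    #{i ∈ s | x ∈ I i} ≤ d := by
  set T := {i ∈ s | x ∈ I i}
  rcases T.eq_empty_or_nonempty with hT | hT
  · simp [hT]
  have hmin : T.min' hT ∈ T := min'_mem T hT
  calc #T ≤ #(Ico (T.min' hT) (T.min' hT + d)) := card_le_card fun i hi => by
          refine mem_Ico.2 ⟨min'_le T i hi, lt_of_not_ge fun hle => ?_⟩
          exact Set.disjoint_left.1 (hI _ _ hle) (mem_filter.1 hmin).2 (mem_filter.1 hi).2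
    _ = d := by simp

theorem prod_le_sum_mul_prod_erase {σ : Type*} [DecidableEq σ] {E : Finset σ} {a b M : σ → ℕ}
    (haM : ∀ j ∈ E, a j ≤ M j) (h : ∃ j ∈ E, a j ≤ b j) :
    ∏ j ∈ E, a j ≤ ∑ j ∈ E, b j * ∏ i ∈ E.erase j, M i := by
  obtain ⟨j, hj, hab⟩ := h
  calc ∏ j ∈ E, a j = a j * ∏ i ∈ E.erase j, a i := (mul_prod_erase E a hj).symm
    _ ≤ b j * ∏ i ∈ E.erase j, M i :=
        Nat.mul_le_mul hab (prod_le_prod' fun i hi => haM i (mem_of_mem_erase hi))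
    _ ≤ ∑ j ∈ E, b j * ∏ i ∈ E.erase j, M i :=
        single_le_sum (f := fun j => b j * ∏ i ∈ E.erase j, M i) (fun _ _ => Nat.zero_le _) hj

section OneFamily

variable {ι : Type*} [Fintype ι] (lo hi : ι → ℝ)

noncomputable def coverCount (x : ℝ) : ℕ := #{b | x ∈ Set.Icc (lo b) (hi b)}

noncomputable def spanCount (u v : ℝ) : ℕ := #{b | lo b ≤ u ∧ v ≤ hi b}

-- Half-open, so that the windows `[q i, q (i + d)]` and `[q i', q (i' + d)]` with `i + d ≤ i'`
-- catch disjoint sets of endpoints.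
noncomputable def endpointCount (u v : ℝ) : ℕ := #{b | lo b ∈ Set.Ioc u v ∨ hi b ∈ Set.Ico u v}

theorem coverCount_le_card (x : ℝ) : coverCount lo hi x ≤ Fintype.card ι :=
  card_filter_le _ _

theorem coverCount_le_spanCount_add_endpointCount {u v x : ℝ} (hx : x ∈ Set.Icc u v) :
    coverCount lo hi x ≤ spanCount lo hi u v + endpointCount lo hi u v := by
  unfold coverCount spanCount endpointCount
  refine (card_le_card (t := univ.filter (fun b => lo b ≤ u ∧ v ≤ hi b) ∪
    univ.filter (fun b => lo b ∈ Set.Ioc u v ∨ hi b ∈ Set.Ico u v)) fun b hb => ?_).trans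
    (Finset.card_union_le _ _)
  simp only [Finset.mem_filter, Finset.mem_univ, true_and, Finset.mem_union, Set.mem_Icc,
    Set.mem_Ioc, Set.mem_Ico] at hb hx ⊢
  by_cases hlo : lo b ≤ u
  · by_cases hhi : v ≤ hi b
    · exact Or.inl ⟨hlo, hhi⟩
    · exact Or.inr (Or.inr ⟨hx.1.trans hb.2, lt_of_not_ge hhi⟩)
  · exact Or.inr (Or.inl ⟨lt_of_not_ge hlo, hb.1.trans hx.2⟩)

theorem sum_endpointCount_le {q : ℕ → ℝ} (hq : Monotone q) (d L : ℕ) :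
    ∑ i ∈ range L, endpointCount lo hi (q i) (q (i + d)) ≤ 2 * d * Fintype.card ι := by
  have hIoc : ∀ i i', i + d ≤ i' →
      Disjoint (Set.Ioc (q i) (q (i + d))) (Set.Ioc (q i') (q (i' + d))) :=
    fun i i' h => Set.Ioc_disjoint_Ioc.2 (min_le_of_left_le (le_max_of_le_right (hq h)))
  have hIco : ∀ i i', i + d ≤ i' →
      Disjoint (Set.Ico (q i) (q (i + d))) (Set.Ico (q i') (q (i' + d))) :=
    fun i i' h => Set.Ico_disjoint_Ico.2 (min_le_of_left_le (le_max_of_le_right (hq h)))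
  calc ∑ i ∈ range L, endpointCount lo hi (q i) (q (i + d))
      ≤ ∑ i ∈ range L, (#(univ.bipartiteAbove (fun i b => lo b ∈ Set.Ioc (q i) (q (i + d))) i)
          + #(univ.bipartiteAbove (fun i b => hi b ∈ Set.Ico (q i) (q (i + d))) i)) :=
        sum_le_sum fun i _ => by
          rw [endpointCount, filter_or]
          exact Finset.card_union_le _ _
    _ = ∑ b : ι, (#{i ∈ range L | lo b ∈ Set.Ioc (q i) (q (i + d))}
          + #{i ∈ range L | hi b ∈ Set.Ico (q i) (q (i + d))}) := by
        rw [sum_add_distrib, sum_add_distrib, sum_card_bipartiteAbove_eq_sum_card_bipartiteBelow,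
          sum_card_bipartiteAbove_eq_sum_card_bipartiteBelow]
        rfl
    _ ≤ ∑ _b : ι, (d + d) := sum_le_sum fun b _ => add_le_add
          (card_filter_mem_le_of_disjoint _ hIoc _ _) (card_filter_mem_le_of_disjoint _ hIco _ _)
    _ = 2 * d * Fintype.card ι := by simp [card_univ]; ring

end OneFamily

section Windows

variable {σ : Type*} [DecidableEq σ] {ι : σ → Type*} [∀ j, Fintype (ι j)] (lo hi : ∀ j, ι j → ℝ)

theorem prod_coverCount_le_of_spanCount_le {E : Finset σ} {d : ℕ} {u v x : ℝ}
    (hx : x ∈ Set.Icc u v) (hspan : ∃ j ∈ E, spanCount (lo j) (hi j) u v ≤ d) :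
    ∏ j ∈ E, coverCount (lo j) (hi j) x
      ≤ ∑ j ∈ E, (d + endpointCount (lo j) (hi j) u v) * ∏ i ∈ E.erase j, Fintype.card (ι i) := by
  obtain ⟨j, hj, hjd⟩ := hspan
  refine prod_le_sum_mul_prod_erase (fun j _ => coverCount_le_card _ _ _) ⟨j, hj, ?_⟩
  have := coverCount_le_spanCount_add_endpointCount (lo j) (hi j) hx
  omega

theorem sum_range_prod_coverCount_le {E : Finset σ} {d L : ℕ} {q : ℕ → ℝ} (hq : Monotone q)
    (hspan : ∀ a < L, ∃ j ∈ E, spanCount (lo j) (hi j) (q a) (q (a + d)) ≤ d) :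
    ∑ i ∈ range L, ∏ j ∈ E, coverCount (lo j) (hi j) (q i)
      ≤ d * (L * ∑ j ∈ E, ∏ i ∈ E.erase j, Fintype.card (ι i)
          + 2 * #E * ∏ j ∈ E, Fintype.card (ι j)) := by
  have hwindow : ∀ a, q a ∈ Set.Icc (q a) (q (a + d)) :=
    fun a => ⟨le_rfl, hq (Nat.le_add_right a d)⟩
  have hcard : ∑ j ∈ E, Fintype.card (ι j) * ∏ i ∈ E.erase j, Fintype.card (ι i)
      = #E * ∏ j ∈ E, Fintype.card (ι j) := by
    rw [sum_congr rfl fun j hj => mul_prod_erase E (fun i => Fintype.card (ι i)) hj, sum_const,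
      smul_eq_mul]
  calc ∑ a ∈ range L, ∏ j ∈ E, coverCount (lo j) (hi j) (q a)
      ≤ ∑ a ∈ range L, ∑ j ∈ E, (d + endpointCount (lo j) (hi j) (q a) (q (a + d)))
          * ∏ i ∈ E.erase j, Fintype.card (ι i) :=
        sum_le_sum fun a ha => prod_coverCount_le_of_spanCount_le lo hi (hwindow a)
          (hspan a (mem_range.1 ha))
    _ = d * (L * ∑ j ∈ E, ∏ i ∈ E.erase j, Fintype.card (ι i)) + ∑ j ∈ E,
          (∑ a ∈ range L, endpointCount (lo j) (hi j) (q a) (q (a + d)))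
            * ∏ i ∈ E.erase j, Fintype.card (ι i) := by
        simp only [add_mul, sum_add_distrib, ← mul_sum, sum_const, card_range, smul_eq_mul,
          sum_mul]
        rw [sum_comm]
    _ ≤ d * (L * ∑ j ∈ E, ∏ i ∈ E.erase j, Fintype.card (ι i)) + ∑ j ∈ E,
          (2 * d * Fintype.card (ι j)) * ∏ i ∈ E.erase j, Fintype.card (ι i) := by
        gcongr with j
        exact sum_endpointCount_le _ _ hq d L
    _ = d * (L * ∑ j ∈ E, ∏ i ∈ E.erase j, Fintype.card (ι i)
          + 2 * #E * ∏ j ∈ E, Fintype.card (ι j)) := by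
        simp only [mul_assoc, ← mul_sum, hcard]
        ring

theorem sum_prod_coverCount_le {E : Finset σ} (hE : E.Nonempty) {d N : ℕ} {q : ℕ → ℝ}
    (hq : Monotone q)
    (hspan : ∀ a, a + d < N → ∃ j ∈ E, spanCount (lo j) (hi j) (q a) (q (a + d)) ≤ d) :
    ∑ i ∈ range N, ∏ j ∈ E, coverCount (lo j) (hi j) (q i)
      ≤ d * (N * ∑ j ∈ E, ∏ i ∈ E.erase j, Fintype.card (ι i)
          + 3 * #E * ∏ j ∈ E, Fintype.card (ι j)) := by
  rw [← sum_range_add_sum_Ico _ (Nat.sub_le N d)]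
  have hwindows := sum_range_prod_coverCount_le lo hi hq (E := E) (d := d) (L := N - d)
    fun a ha => hspan a (by omega)
  have htail : ∑ i ∈ Ico (N - d) N, ∏ j ∈ E, coverCount (lo j) (hi j) (q i)
      ≤ d * ∏ j ∈ E, Fintype.card (ι j) := by
    refine (sum_le_card_nsmul _ _ _ fun i _ =>
      prod_le_prod' fun j _ => coverCount_le_card (lo j) (hi j) (q i)).trans ?_
    rw [Nat.card_Ico, smul_eq_mul]
    exact Nat.mul_le_mul_right _ (by omega)
  have hprod : ∏ j ∈ E, Fintype.card (ι j) ≤ #E * ∏ j ∈ E, Fintype.card (ι j) :=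
    Nat.le_mul_of_pos_left _ hE.card_pos
  have hshift := Nat.mul_le_mul_right (∑ j ∈ E, ∏ i ∈ E.erase j, Fintype.card (ι i))
    (Nat.sub_le N d)
  calc _ ≤ d * ((N - d) * ∑ j ∈ E, ∏ i ∈ E.erase j, Fintype.card (ι i)
          + 2 * #E * ∏ j ∈ E, Fintype.card (ι j)) + d * ∏ j ∈ E, Fintype.card (ι j) :=
        add_le_add hwindows htail
    _ ≤ _ := by
        rw [← mul_add]
        exact Nat.mul_le_mul_left d (by linarith)

end Windows

theorem exists_monotone_perm {N : ℕ} (p : Fin N → ℝ) :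
    ∃ q : ℕ → ℝ, Monotone q ∧ ∃ σ : Equiv.Perm (Fin N), ∀ i, p (σ i) = q i := by
  cases N with
  | zero => exact ⟨0, monotone_const, 1, fun i => i.elim0⟩
  | succ m =>
    refine ⟨fun a => p (Tuple.sort p ⟨min a m, by omega⟩),
      fun a b hab => Tuple.monotone_sort p (Fin.mk_le_mk.2 (min_le_min_right m hab)),
      Tuple.sort p, fun i => ?_⟩
    simp only [min_eq_left (Nat.le_of_lt_succ i.2)]

theorem le_card_filter_mem_Icc {N : ℕ} {p : Fin N → ℝ} {q : ℕ → ℝ} (hq : Monotone q)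
    {σ : Equiv.Perm (Fin N)} (hσ : ∀ i, p (σ i) = q i) {a d : ℕ} (had : a + d < N) :
    d + 1 ≤ #{b | p b ∈ Set.Icc (q a) (q (a + d))} :=
  calc d + 1 = #((Finset.Icc (⟨a, by omega⟩ : Fin N) ⟨a + d, had⟩).map σ.toEmbedding) := by
        simp only [card_map, Fin.card_Icc]
        omega
    _ ≤ _ := card_le_card fun b hb => by
        obtain ⟨i, hi, rfl⟩ := mem_map.1 hb
        rw [Finset.mem_Icc] at hi
        rw [mem_filter, Equiv.toEmbedding_apply, hσ]
        exact ⟨mem_univ _, hq hi.1, hq hi.2⟩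

theorem sum_mul_sum_prod_erase_erase {r : ℕ} (n : Fin r → ℕ) :
    ∑ k, n k * ∑ j ∈ univ.erase k, ∏ i ∈ (univ.erase k).erase j, n i
      = (r - 1) * ∑ j, ∏ i ∈ univ.erase j, n i := by
  have hpeel : ∀ k, n k * ∑ j ∈ univ.erase k, ∏ i ∈ (univ.erase k).erase j, n i
      = ∑ j ∈ univ.erase k, ∏ i ∈ univ.erase j, n i := fun k => by
    rw [mul_sum]
    refine sum_congr rfl fun j hj => ?_
    rw [erase_right_comm]
    exact mul_prod_erase _ _ (mem_erase.2 ⟨(ne_of_mem_erase hj).symm, Finset.mem_univ k⟩)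
  rw [sum_congr rfl fun k _ => hpeel k,
    sum_comm' (t' := univ) (s' := fun j => univ.erase j) fun k j => by simp [eq_comm]]
  simp [card_erase_of_mem, mul_sum]

section Intervals

variable {r t : ℕ} {n : Fin r → ℕ} (lo hi : ∀ j, Fin (n j) → ℝ)

theorem exists_spanCount_lt_of_kFree (hle : ∀ j b, lo j b ≤ hi j b)
    (hfree : KFree t n fun j b => Set.Icc (lo j b) (hi j b)) {k : Fin r} {u v : ℝ}
    (hk : t ≤ #{b | hi k b ∈ Set.Icc u v}) :
    ∃ j ∈ univ.erase k, spanCount (lo j) (hi j) u v < t := by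
  by_contra! hspan
  let good : ∀ j, Fin (n j) → Prop := fun j b =>
    if j = k then hi j b ∈ Set.Icc u v else lo j b ≤ u ∧ v ≤ hi j b
  have hgood : ∀ j, t ≤ #{b | good j b} := by
    intro j
    by_cases hj : j = k
    · subst hj
      simpa [good] using hk
    · simpa [good, hj, spanCount] using hspan j (mem_erase.2 ⟨hj, mem_univ j⟩)
  choose S hS hcard using fun j => exists_subset_card_eq (hgood j)
  refine hfree ⟨S, hcard, fun f hf => ⟨hi k (f k), Set.mem_iInter.2 fun j => ?_⟩⟩
  have hk' : hi k (f k) ∈ Set.Icc u v := by simpa [good] using (mem_filter.1 (hS k (hf k))).2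
  by_cases hj : j = k
  · subst hj
    exact ⟨hle j (f j), le_rfl⟩
  · have hj' : lo j (f j) ≤ u ∧ v ≤ hi j (f j) := by
      simpa [good, hj] using (mem_filter.1 (hS j (hf j))).2
    exact ⟨hj'.1.trans hk'.1, hk'.2.trans hj'.2⟩

theorem sum_prod_coverCount_le_of_kFree (hr : 2 ≤ r) (ht : 0 < t) (hle : ∀ j b, lo j b ≤ hi j b)
    (hfree : KFree t n fun j b => Set.Icc (lo j b) (hi j b)) (k : Fin r) :
    ∑ b, ∏ j ∈ univ.erase k, coverCount (lo j) (hi j) (hi k b)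
      ≤ (t - 1) * (n k * ∑ j ∈ univ.erase k, ∏ i ∈ (univ.erase k).erase j, n i
          + 3 * (r - 1) * ∏ j ∈ univ.erase k, n j) := by
  obtain ⟨q, hq, σ, hσ⟩ := exists_monotone_perm (hi k)
  have hcard : #(univ.erase k) = r - 1 := by
    rw [card_erase_of_mem (mem_univ k), card_univ, Fintype.card_fin]
  have hE : (univ.erase k).Nonempty := card_pos.1 (by omega)
  have hbound := sum_prod_coverCount_le lo hi hE hq (d := t - 1) (N := n k) fun a ha =>
    (exists_spanCount_lt_of_kFree lo hi hle hfree
      ((le_card_filter_mem_Icc hq hσ ha).trans' (by omega))).imp fun _ ⟨hj, hlt⟩ => ⟨hj, by omega⟩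
  rw [← Equiv.sum_comp σ]
  simp only [hσ,
    Fin.sum_univ_eq_sum_range (fun i => ∏ j ∈ univ.erase k, coverCount (lo j) (hi j) (q i))]
  simpa [hcard] using hbound

theorem card_filter_forall_mem_Icc_le (k : Fin r) :
    #{f : ∀ j, Fin (n j) | ∀ j, hi k (f k) ∈ Set.Icc (lo j (f j)) (hi j (f j))}
      ≤ ∑ b, ∏ j ∈ univ.erase k, coverCount (lo j) (hi j) (hi k b) := by
  rw [card_eq_sum_card_fiberwise (f := fun f => f k) (t := univ) fun _ _ => mem_univ _]
  refine sum_le_sum fun b _ => ?_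
  let D : ∀ j, Finset (Fin (n j)) := fun j => {c | hi k b ∈ Set.Icc (lo j c) (hi j c)}
  calc _ ≤ #{f ∈ Fintype.piFinset D | f k = b} := card_le_card fun f hf => by
          simp only [mem_filter, Finset.mem_univ, true_and, Fintype.mem_piFinset, D] at hf ⊢
          exact ⟨fun j => hf.2 ▸ hf.1 j, hf.2⟩
    _ ≤ ∏ j ∈ univ.erase k, #(D j) :=
          (Fintype.card_filter_piFinset_eq D k b).trans_le (by split_ifs <;> simp)
    _ = _ := rfl

theorem hyperedgeCount_Icc_le_sum_prod_coverCount (hr : 0 < r) :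
    hyperedgeCount n (fun j b => Set.Icc (lo j b) (hi j b))
      ≤ ∑ k, ∑ b, ∏ j ∈ univ.erase k, coverCount (lo j) (hi j) (hi k b) := by
  rw [hyperedgeCount, Nat.card_eq_fintype_card, Fintype.card_subtype]
  calc _ ≤ #(univ.biUnion fun k =>
        {f : ∀ j, Fin (n j) | ∀ j, hi k (f k) ∈ Set.Icc (lo j (f j)) (hi j (f j))}) := by
        refine card_le_card fun f hf => ?_
        obtain ⟨z, hz⟩ := (mem_filter.1 hf).2
        rw [Set.mem_iInter] at hz
        obtain ⟨k, -, hk⟩ :=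
          exists_min_image univ (fun j => hi j (f j)) (univ_nonempty_iff.2 ⟨⟨0, hr⟩⟩)
        refine mem_biUnion.2 ⟨k, Finset.mem_univ k, mem_filter.2 ⟨Finset.mem_univ f, fun j => ?_⟩⟩
        exact ⟨(hz j).1.trans (hz k).2, hk j (Finset.mem_univ j)⟩
    _ ≤ _ := card_biUnion_le
    _ ≤ _ := sum_le_sum fun k _ => card_filter_forall_mem_Icc_le lo hi k

theorem hyperedgeCount_Icc_le (hr : 2 ≤ r) (ht : 0 < t) (hle : ∀ j b, lo j b ≤ hi j b)
    (hfree : KFree t n fun j b => Set.Icc (lo j b) (hi j b)) :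
    hyperedgeCount n (fun j b => Set.Icc (lo j b) (hi j b))
      ≤ 4 * (t - 1) * (r - 1) * ∑ j, ∏ i ∈ univ.erase j, n i :=
  calc _ ≤ ∑ k, ∑ b, ∏ j ∈ univ.erase k, coverCount (lo j) (hi j) (hi k b) :=
        hyperedgeCount_Icc_le_sum_prod_coverCount lo hi (by omega)
    _ ≤ ∑ k, (t - 1) * (n k * ∑ j ∈ univ.erase k, ∏ i ∈ (univ.erase k).erase j, n i
          + 3 * (r - 1) * ∏ j ∈ univ.erase k, n j) :=
        sum_le_sum fun k _ => sum_prod_coverCount_le_of_kFree lo hi hr ht hle hfree k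
    _ = _ := by
        rw [← mul_sum, sum_add_distrib, sum_mul_sum_prod_erase_erase, ← mul_sum]
        ring

end Intervals

theorem hyperedgeCount_preimage {α β : Type} {g : α → β} (hg : Function.Surjective g) {r : ℕ}
    {n : Fin r → ℕ} (B : ∀ j, Fin (n j) → Set β) :
    hyperedgeCount n (fun j b => g ⁻¹' B j b) = hyperedgeCount n B := by
  simp only [hyperedgeCount, ← Set.preimage_iInter, hg.nonempty_preimage]

theorem kFree_preimage {α β : Type} {g : α → β} (hg : Function.Surjective g) {r t : ℕ}
    {n : Fin r → ℕ} (B : ∀ j, Fin (n j) → Set β) :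
    KFree t n (fun j b => g ⁻¹' B j b) ↔ KFree t n B := by
  simp only [KFree, ← Set.preimage_iInter, hg.nonempty_preimage]

theorem boxSet_fin_one (lo hi : Fin 1 → ℝ) :
    boxSet lo hi = (fun x : Fin 1 → ℝ => x 0) ⁻¹' Set.Icc (lo 0) (hi 0) := by
  ext x
  simp [boxSet, Fin.forall_fin_one]

theorem gZ_eq_mul_sum_prod_erase {r : ℕ} (t : ℕ) {n : Fin r → ℕ} (hn : ∀ j, 0 < n j) :
    gZ t n = t * ((∑ j, ∏ i ∈ univ.erase j, n i : ℕ) : ℝ) := by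
  rw [gZ, mul_assoc, mul_sum]
  push_cast
  refine congrArg _ (sum_congr rfl fun j _ => ?_)
  rw [← mul_prod_erase univ (fun i => (n i : ℝ)) (Finset.mem_univ j)]
  have : (n j : ℝ) ≠ 0 := by exact_mod_cast (hn j).ne'
  field_simp

theorem four_mul_sub_one_mul_lt_four_pow_mul {r t S : ℕ} (ht : 0 < t) (hS : 0 < S) :
    4 * (t - 1) * (r - 1) * S < 4 ^ (r - 1) * (t * S) :=
  calc 4 * (t - 1) * (r - 1) * S = (t - 1) * (4 * (r - 1)) * S := by ring
    _ ≤ (t - 1) * 4 ^ (r - 1) * S := by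
        gcongr
        exact Nat.mul_le_pow (by norm_num) (r - 1)
    _ < t * 4 ^ (r - 1) * S := by
        gcongr
        omega
    _ = 4 ^ (r - 1) * (t * S) := by ring

/-- the one-dimensional case, `e(H) < 4^{r-1} · g_t(n_1,…,n_r)` for any
direction-vector `F` in `ℝ¹`. -/
theorem stmt11 (r t : ℕ) (hr : 2 ≤ r) (ht : 2 ≤ t)
    (F : Fin r → Set (Fin 1)) (n : Fin r → ℕ) (hn : ∀ j, 0 < n j)
    (B : ∀ j : Fin r, Fin (n j) → Set (Fin 1 → ℝ))
    (hB : ∀ j k, IsBoxDir (B j k) (F j))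
    (hfree : KFree t n B) :
    (hyperedgeCount n B : ℝ) < 4 ^ (r - 1) * gZ t n := by
  choose lo hi hle hbox using hB
  have hsurj : Function.Surjective fun x : Fin 1 → ℝ => x 0 := fun y => ⟨fun _ => y, rfl⟩
  obtain rfl : B = fun j b => (fun x : Fin 1 → ℝ => x 0) ⁻¹' Set.Icc (lo j b 0) (hi j b 0) :=
    funext₂ fun j b => (hbox j b).1.trans (boxSet_fin_one _ _)
  rw [kFree_preimage hsurj] at hfree
  rw [hyperedgeCount_preimage hsurj, gZ_eq_mul_sum_prod_erase t hn]
  set S := ∑ j, ∏ i ∈ univ.erase j, n i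
  have hS : 0 < S :=
    sum_pos (fun j _ => prod_pos fun i _ => hn i) ⟨⟨0, by omega⟩, Finset.mem_univ _⟩
  have hcount := hyperedgeCount_Icc_le (fun j b => lo j b 0) (fun j b => hi j b 0) hr (by omega)
    (fun j b => hle j b 0) hfree
  exact_mod_cast hcount.trans_lt (four_mul_sub_one_mul_lt_four_pow_mul (by omega) hS)
end

section
/- Let r ≥ 2 and t ≥ 2 be integers. In ℝ¹, let B_1, …, B_r be finite indexed families (repetitions allowed) of closed segments with |B_i| = n_i for i = 1, …, r. If the intersection hypergraph H of (B_1, …, B_r) is K_{t,…,t}^{(r)}-free, then the number of hyperedges of H is strictly less than 4^{r-1} · g_t(n_1, …, n_r). -/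
open Set

/-- `S` is a closed segment (interval) in `ℝ¹`, degenerate allowed. -/
def IsSeg (S : Set ℝ) : Prop := ∃ a b : ℝ, a ≤ b ∧ S = Set.Icc a b

/-!
We prove the stronger bound `e(H) ≤ (t - 1) · ∑ₗ ∏_{i ≠ l} nᵢ` by induction on the number of
segments, deleting one segment at a time. If a segment of family `a` meets fewer than `t` segments of
some family `b ≠ a` inside hyperedges, deleting it loses at most `(t - 1) ∏_{i ≠ a, b} nᵢ` hyperedges
while the bound drops by at least `∏_{i ≠ a, b} nᵢ`. Such a segment exists: let `c` be the leftmost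
right endpoint, attained in family `j`. Every hyperedge through that segment consists of segments
containing `c`; so either some other family has fewer than `t` segments through `c`, or all do, and
then a segment of another family has fewer than `t` neighbours in family `j`.
-/

open Finset Function

section ProdErase

variable {ι : Type*} [Fintype ι] [DecidableEq ι]

def sumProdErase (m : ι → ℕ) : ℕ :=
  ∑ l, ∏ i ∈ univ.erase l, m i

lemma sumProdErase_add_prod_le {m m' : ι → ℕ} {a b : ι} (hab : a ≠ b)
    (ha : m' a < m a) (hrest : ∀ i ≠ a, m' i = m i) :
    sumProdErase m' + ∏ i ∈ (univ.erase b).erase a, m i ≤ sumProdErase m := by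
  have hle : ∀ i, m' i ≤ m i := fun i => by
    rcases eq_or_ne i a with rfl | hia
    exacts [ha.le, (hrest i hia).le]
  have hterm : ∀ l, ∏ i ∈ univ.erase l, m' i
      + (if l = b then ∏ i ∈ (univ.erase b).erase a, m i else 0) ≤ ∏ i ∈ univ.erase l, m i := by
    intro l
    split_ifs with hlb
    · subst hlb
      have hmem : a ∈ univ.erase l := mem_erase.2 ⟨hab, mem_univ a⟩
      rw [← mul_prod_erase _ m' hmem, ← mul_prod_erase _ m hmem,
        prod_congr rfl fun i hi => hrest i (mem_erase.1 hi).1]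
      calc _ = (m' a + 1) * ∏ i ∈ (univ.erase l).erase a, m i := by ring
        _ ≤ _ := Nat.mul_le_mul_right _ ha
    · simpa using prod_le_prod' fun i _ => hle i
  calc sumProdErase m' + ∏ i ∈ (univ.erase b).erase a, m i
      = ∑ l, (∏ i ∈ univ.erase l, m' i
          + if l = b then ∏ i ∈ (univ.erase b).erase a, m i else 0) := by
        simp [sumProdErase, sum_add_distrib]
    _ ≤ sumProdErase m := sum_le_sum fun l _ => hterm l

end ProdErase

section Hypergraph

variable {α : Type} {r t : ℕ} {n : Fin r → ℕ} {B : ∀ j : Fin r, Fin (n j) → Set α}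

open Classical in
noncomputable def edgesIn (B : ∀ j : Fin r, Fin (n j) → Set α)
    (A : ∀ j : Fin r, Finset (Fin (n j))) : Finset (∀ j : Fin r, Fin (n j)) :=
  (Fintype.piFinset A).filter fun f => (⋂ j, B j (f j)).Nonempty

lemma mem_edgesIn {A : ∀ j : Fin r, Finset (Fin (n j))} {f : ∀ j : Fin r, Fin (n j)} :
    f ∈ edgesIn B A ↔ (∀ j, f j ∈ A j) ∧ (⋂ j, B j (f j)).Nonempty := by
  simp [edgesIn]

lemma hyperedgeCount_eq_card_edgesIn : hyperedgeCount n B = #(edgesIn B fun _ => univ) := by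
  classical
  rw [hyperedgeCount, Nat.card_eq_fintype_card, Fintype.card_subtype]
  congr 1

lemma KFree.exists_not_nonempty (hfree : KFree t n B) {C : ∀ j : Fin r, Finset (Fin (n j))}
    (hC : ∀ j, t ≤ #(C j)) :
    ∃ f : ∀ j : Fin r, Fin (n j), (∀ j, f j ∈ C j) ∧ ¬ (⋂ j, B j (f j)).Nonempty := by
  choose S hSC hS using fun j => exists_subset_card_eq (hC j)
  by_contra! h
  exact hfree ⟨S, hS, fun f hf => h f fun j => hSC j (hf j)⟩

lemma card_edgesIn_le_erase_add (A : ∀ j : Fin r, Finset (Fin (n j))) (a : Fin r)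
    (s : Fin (n a)) :
    #(edgesIn B A) ≤ #(edgesIn B (update A a ((A a).erase s)))
      + #((edgesIn B A).filter fun f => f a = s) := by
  rw [← card_filter_add_card_filter_not (s := edgesIn B A) (fun f => f a = s), add_comm]
  refine Nat.add_le_add_right (card_le_card fun f hf => ?_) _
  obtain ⟨hfE, hfa⟩ := mem_filter.1 hf
  refine mem_edgesIn.2 ⟨fun i => ?_, (mem_edgesIn.1 hfE).2⟩
  rcases eq_or_ne i a with rfl | hia
  · simpa [hfa] using (mem_edgesIn.1 hfE).1 i
  · simpa [hia] using (mem_edgesIn.1 hfE).1 i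

lemma card_filter_edgesIn_le {A : ∀ j : Fin r, Finset (Fin (n j))} {a b : Fin r} (hab : a ≠ b)
    {s : Fin (n a)} {N : Finset (Fin (n b))} (hN : ∀ f ∈ edgesIn B A, f a = s → f b ∈ N) :
    #((edgesIn B A).filter fun f => f a = s) ≤ #N * ∏ i ∈ (univ.erase b).erase a, #(A i) := by
  set C := update (update A a {s}) b N
  have hsub : (edgesIn B A).filter (fun f => f a = s) ⊆ Fintype.piFinset C := by
    intro f hf
    obtain ⟨hfE, hfa⟩ := mem_filter.1 hf
    refine Fintype.mem_piFinset.2 fun i => ?_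
    rcases eq_or_ne i b with rfl | hib
    · simpa [C] using hN f hfE hfa
    rcases eq_or_ne i a with rfl | hia
    · simp [C, hib, hfa]
    · simpa [C, hia, hib] using (mem_edgesIn.1 hfE).1 i
  have hmem : a ∈ univ.erase b := mem_erase.2 ⟨hab, mem_univ a⟩
  calc _ ≤ #(Fintype.piFinset C) := card_le_card hsub
    _ = #(C b) * (#(C a) * ∏ i ∈ (univ.erase b).erase a, #(C i)) := by
      rw [Fintype.card_piFinset, ← mul_prod_erase _ _ (mem_univ b), ← mul_prod_erase _ _ hmem]
    _ = #N * ∏ i ∈ (univ.erase b).erase a, #(A i) := by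
      have hrest : ∀ i ∈ (univ.erase b).erase a, C i = A i := fun i hi => by
        obtain ⟨hia, hib⟩ : i ≠ a ∧ i ≠ b :=
          ⟨(mem_erase.1 hi).1, (mem_erase.1 (mem_of_mem_erase hi)).1⟩
        simp [C, hia, hib]
      rw [prod_congr rfl fun i hi => congrArg card (hrest i hi)]
      simp [C, hab]

end Hypergraph

section Segments

variable {α : Type} [LinearOrder α] {r t : ℕ} {n : Fin r → ℕ} {B : ∀ j : Fin r, Fin (n j) → Set α}
  {lo hi : ∀ j : Fin r, Fin (n j) → α} {A : ∀ j : Fin r, Finset (Fin (n j))}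

/- Take `y` with the leftmost right endpoint `q` among the segments `S i`, `i ≠ j`. Every segment of
family `j` meeting `y` meets `[c, q]`, which lies in all those segments, so `t` of them would span a
`K_{t,…,t}`. -/
lemma exists_few_neighbors_of_many_through (hr : 2 ≤ r) (ht : 0 < t)
    (hB : ∀ j k, B j k = Icc (lo j k) (hi j k)) (hfree : KFree t n B) {j : Fin r} {c : α}
    (hc : ∀ i, ∀ k ∈ A i, c ≤ hi i k) {S : ∀ i : Fin r, Finset (Fin (n i))}
    (hSA : ∀ i ≠ j, S i ⊆ A i) (hSc : ∀ i ≠ j, ∀ k ∈ S i, c ∈ B i k)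
    (hS : ∀ i ≠ j, t ≤ #(S i)) :
    ∃ i ≠ j, ∃ y ∈ A i, ∃ N : Finset (Fin (n j)), #N < t ∧
      ∀ f ∈ edgesIn B A, f i = y → f j ∈ N := by
  classical
  have : Nontrivial (Fin r) := Fin.nontrivial_iff_two_le.2 hr
  obtain ⟨i₀, hi₀⟩ := exists_ne j
  obtain ⟨y₀, hy₀⟩ := card_pos.1 (ht.trans_le (hS i₀ hi₀))
  obtain ⟨⟨i, y⟩, hiy, hiymin⟩ := exists_min_image ((univ.erase j).sigma S)
    (fun p => hi p.1 p.2) ⟨⟨i₀, y₀⟩, mem_sigma.2 ⟨mem_erase.2 ⟨hi₀, mem_univ _⟩, hy₀⟩⟩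
  have hy : i ≠ j ∧ y ∈ S i := by simpa using hiy
  set q := hi i y
  have hqmin : ∀ i' ≠ j, ∀ k ∈ S i', q ≤ hi i' k := fun i' hi' k hk =>
    hiymin ⟨i', k⟩ (mem_sigma.2 ⟨mem_erase.2 ⟨hi', mem_univ _⟩, hk⟩)
  have hcq : c ≤ q := hc i y (hSA i hy.1 hy.2)
  have hcover : ∀ i' ≠ j, ∀ k ∈ S i', Icc c q ⊆ B i' k := fun i' hi' k hk x hx => by
    have hck := hSc i' hi' k hk
    rw [hB] at hck ⊢
    exact ⟨hck.1.trans hx.1, hx.2.trans (hqmin i' hi' k hk)⟩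
  set T := (A j).filter fun x => (B j x ∩ Icc c q).Nonempty
  refine ⟨i, hy.1, y, hSA i hy.1 hy.2, T, ?_, fun f hf hfy => ?_⟩
  · by_contra! hT
    obtain ⟨f, hf, hempty⟩ := hfree.exists_not_nonempty (C := update S j T) fun i' => by
      rcases eq_or_ne i' j with rfl | hi'
      · simpa using hT
      · simpa [hi'] using hS i' hi'
    have hfT : f j ∈ T := by simpa using hf j
    obtain ⟨x, hxj, hxcq⟩ := (mem_filter.1 hfT).2
    refine hempty ⟨x, mem_iInter.2 fun i' => ?_⟩
    rcases eq_or_ne i' j with rfl | hi'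
    · exact hxj
    · exact hcover i' hi' (f i') (by simpa [hi'] using hf i') hxcq
  · obtain ⟨hfA, x, hx⟩ := mem_edgesIn.1 hf
    rw [mem_iInter] at hx
    have hxj := hx j
    have hxi := hx i
    rw [hB] at hxj
    rw [hB, hfy] at hxi
    have hxq : x ≤ q := hxi.2
    refine mem_filter.2 ⟨hfA j, max x c, ?_, le_max_right x c, max_le hxq hcq⟩
    rw [hB]
    exact ⟨hxj.1.trans (le_max_left x c), max_le hxj.2 (hc j (f j) (hfA j))⟩

lemma exists_few_neighbors (hr : 2 ≤ r) (ht : 0 < t) (hB : ∀ j k, B j k = Icc (lo j k) (hi j k))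
    (hfree : KFree t n B) (hA : ∀ j, (A j).Nonempty) :
    ∃ a b, a ≠ b ∧ ∃ s ∈ A a, ∃ N : Finset (Fin (n b)), #N < t ∧
      ∀ f ∈ edgesIn B A, f a = s → f b ∈ N := by
  classical
  obtain ⟨k₀, hk₀⟩ := hA ⟨0, by omega⟩
  obtain ⟨⟨j, k⟩, hjk, hjkmin⟩ := exists_min_image (univ.sigma A) (fun p => hi p.1 p.2)
    ⟨⟨_, k₀⟩, mem_sigma.2 ⟨mem_univ _, hk₀⟩⟩
  have hk : k ∈ A j := (mem_sigma.1 hjk).2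
  have hmin : ∀ i, ∀ x ∈ A i, hi j k ≤ hi i x := fun i x hx =>
    hjkmin ⟨i, x⟩ (mem_sigma.2 ⟨mem_univ _, hx⟩)
  set F := fun i => (A i).filter fun x => hi j k ∈ B i x
  by_cases hmany : ∀ i ≠ j, t ≤ #(F i)
  · obtain ⟨i, hij, y, hy, N, hN, hdeg⟩ := exists_few_neighbors_of_many_through hr ht hB hfree
      hmin (fun i _ => filter_subset _ _) (fun i _ x hx => (mem_filter.1 hx).2) hmany
    exact ⟨i, j, hij, y, hy, N, hN, hdeg⟩
  push Not at hmany
  obtain ⟨i, hij, hFi⟩ := hmany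
  refine ⟨j, i, hij.symm, k, hk, F i, hFi, fun f hf hfk => ?_⟩
  -- the segments of an edge through `k` share a point left of `hi j k`, so they all contain it
  obtain ⟨hfA, x, hx⟩ := mem_edgesIn.1 hf
  rw [mem_iInter] at hx
  have hxj := hx j
  have hxi := hx i
  rw [hB, hfk] at hxj
  rw [hB] at hxi
  refine mem_filter.2 ⟨hfA i, ?_⟩
  rw [hB]
  exact ⟨hxi.1.trans hxj.2, hmin i (f i) (hfA i)⟩

theorem card_edgesIn_le (hr : 2 ≤ r) (ht : 0 < t) (hB : ∀ j k, B j k = Icc (lo j k) (hi j k))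
    (hfree : KFree t n B) (A : ∀ j : Fin r, Finset (Fin (n j))) :
    #(edgesIn B A) ≤ (t - 1) * sumProdErase fun i => #(A i) := by
  obtain ⟨M, hM⟩ : ∃ M, ∑ j, #(A j) = M := ⟨_, rfl⟩
  induction M using Nat.strong_induction_on generalizing A with
  | _ M ih =>
  by_cases hA : ∀ j, (A j).Nonempty
  swap
  · push Not at hA
    obtain ⟨j, hj⟩ := hA
    have : edgesIn B A = ∅ := eq_empty_of_forall_notMem fun f hf => by
      simpa [hj] using (mem_edgesIn.1 hf).1 j
    simp [this]
  obtain ⟨a, b, hab, s, hs, N, hN, hdeg⟩ := exists_few_neighbors hr ht hB hfree hA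
  set A' := update A a ((A a).erase s)
  have hlt : #(A' a) < #(A a) := by simpa [A'] using card_erase_lt_of_mem hs
  have hrest : ∀ i ≠ a, #(A' i) = #(A i) := fun i hi => by simp [A', hi]
  have hM' : ∑ j, #(A' j) < M := hM ▸ sum_lt_sum
    (fun i _ => (eq_or_ne i a).elim (fun h => h ▸ hlt.le) fun h => (hrest i h).le)
    ⟨a, mem_univ a, hlt⟩
  calc #(edgesIn B A)
      ≤ #(edgesIn B A') + #((edgesIn B A).filter fun f => f a = s) :=
        card_edgesIn_le_erase_add A a s
    _ ≤ (t - 1) * sumProdErase (fun i => #(A' i))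
          + (t - 1) * ∏ i ∈ (univ.erase b).erase a, #(A i) :=
        add_le_add (ih _ hM' A' rfl)
          ((card_filter_edgesIn_le hab hdeg).trans (Nat.mul_le_mul_right _ (by omega)))
    _ ≤ (t - 1) * sumProdErase fun i => #(A i) := by
        rw [← mul_add]
        exact Nat.mul_le_mul_left _ (sumProdErase_add_prod_le hab hlt hrest)

end Segments

lemma gZ_eq_mul_sumProdErase {r : ℕ} (t : ℕ) {n : Fin r → ℕ} (hn : ∀ i, 0 < n i) :
    gZ t n = t * (sumProdErase n : ℝ) := by
  rw [gZ, mul_assoc, mul_sum, sumProdErase]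
  push_cast
  congr 1
  refine sum_congr rfl fun l _ => ?_
  have hl : (n l : ℝ) ≠ 0 := by exact_mod_cast (hn l).ne'
  rw [← mul_prod_erase _ (fun i => (n i : ℝ)) (mem_univ l)]
  field_simp

/-- `r` families of segments in `ℝ¹`; `K_{t,…,t}`-free implies
`e(H) < 4^{r-1} · g_t(n_1,…,n_r)`. -/
theorem stmt14 (r t : ℕ) (hr : 2 ≤ r) (ht : 2 ≤ t)
    (n : Fin r → ℕ) (hn : ∀ i, 0 < n i)
    (B : ∀ i : Fin r, Fin (n i) → Set ℝ) (hB : ∀ i k, IsSeg (B i k))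
    (hfree : KFree t n B) :
    (hyperedgeCount n B : ℝ) < 4 ^ (r - 1) * gZ t n := by
  choose lo hi _ hBeq using hB
  have hbound := card_edgesIn_le hr (by omega) hBeq hfree fun _ => univ
  simp only [card_univ, Fintype.card_fin] at hbound
  have hpos : 0 < sumProdErase n := by
    have : Nonempty (Fin r) := ⟨⟨0, by omega⟩⟩
    exact sum_pos (fun l _ => prod_pos fun i _ => hn i) univ_nonempty
  rw [gZ_eq_mul_sumProdErase t hn, hyperedgeCount_eq_card_edgesIn]
  calc (#(edgesIn B fun _ => univ) : ℝ) ≤ ((t - 1 : ℕ) : ℝ) * sumProdErase n := by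
        exact_mod_cast hbound
    _ < t * sumProdErase n := by gcongr; exact_mod_cast Nat.sub_lt (by omega) one_pos
    _ ≤ 4 ^ (r - 1) * (t * sumProdErase n) :=
        le_mul_of_one_le_left (by positivity) (one_le_pow₀ (by norm_num))
end

section
/- Let d ≥ 2 and t ≥ 2 be integers and let B_1, …, B_d be finite indexed families (repetitions allowed) of axis-parallel boxes in ℝ^d such that every box of B_i intersects every box of B_j whenever i ≠ j. If the intersection hypergraph H of (B_1, …, B_d) is K_{t,…,t}^{(d)}-free, then min_{i} |B_i| < t. -/
open Set

/-- if all pairs of boxes from different families intersect and the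
intersection hypergraph is `K_{t,…,t}`-free, then some family has fewer than `t` boxes. -/
theorem stmt15 (d t : ℕ) (hd : 2 ≤ d) (ht : 2 ≤ t)
    (n : Fin d → ℕ) (B : ∀ i : Fin d, Fin (n i) → Set (Fin d → ℝ))
    (hbox : ∀ i k, IsBox (B i k))
    (hcross : ∀ i j, i ≠ j → ∀ k l, (B i k ∩ B j l).Nonempty)
    (hfree : KFree t n B) :
    ∃ i, n i < t := by
  by_contra hc
  push_neg at hc
  apply hfree
  refine ⟨fun j => Finset.map (Fin.castLEEmb (hc j)) Finset.univ, fun j => by simp, ?_⟩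
  intro f _
  choose lo hi hle hB using fun j => hbox j (f j)
  have hne : (Finset.univ : Finset (Fin d)).Nonempty := ⟨⟨0, by omega⟩, Finset.mem_univ _⟩
  refine ⟨fun i => Finset.sup' Finset.univ hne (fun j => lo j i), Set.mem_iInter.2 fun j => ?_⟩
  rw [hB j]
  intro i
  constructor
  · exact Finset.le_sup' (fun j => lo j i) (Finset.mem_univ j)
  · refine Finset.sup'_le _ _ fun k _ => ?_
    by_cases hkj : k = j
    · subst hkj; exact hle k i
    · obtain ⟨y, hy1, hy2⟩ := hcross k j hkj (f k) (f j)
      rw [hB k] at hy1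
      rw [hB j] at hy2
      exact le_trans (hy1 i).1 (hy2 i).2
end
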